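/- arXiv:2511.09504 — 8 statements merged into one kernel-verified Lean document; each statement's English description precedes it below -/
import Mathlib

section
/- Let F be a field and let M be an n×n matrix over F that is symmetric (Mᵀ = M) or skew-symmetric (Mᵀ = −M). Then the rank of M equals the maximum of |S| over all subsets S ⊆ {1,…,n} such that the principal submatrix M[S] is nonsingular (where M[∅] is nonsingular by convention, contributing the value 0). -/
/-!
Choose rows `S` of `M` forming a basis of its row space, so `|S| = rank M`. By (skew-)symmetry
the columns `S` then span the column space, and restricting rows does not shrink the rank of a
column selection that already spans the column space. Hence `M[S]` has rank `|S|` and is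
nonsingular. Conversely, a nonsingular `M[S]` is a submatrix of rank `|S|`, so `|S| ≤ rank M`.
-/

open Matrix

/-- The principal submatrix of `M` with rows and columns indexed by the finite set `S`;
by convention the determinant of the empty principal submatrix is `1`, so it is nonsingular. -/
def psub {R V : Type*} (M : Matrix V V R) (S : Finset V) : Matrix ↥S ↥S R :=
  M.submatrix Subtype.val Subtype.val

open Module

namespace Matrix

variable {R K m n m₀ n₀ : Type*}

theorem rank_neg [CommRing R] [Fintype n] (A : Matrix m n R) : (-A).rank = A.rank := by
  rw [← neg_one_smul R A]
  exact rank_smul_of_mem_nonZeroDivisors A (IsUnit.mem_nonZeroDivisors isUnit_one.neg)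

theorem range_mulVecLin_submatrix_rows [CommSemiring R] [Fintype n] (A : Matrix m n R)
    (r : m₀ → m) :
    LinearMap.range (A.submatrix r id).mulVecLin =
      (LinearMap.range A.mulVecLin).map (LinearMap.funLeft R R r) := by
  rw [← LinearMap.range_comp]
  rfl

theorem range_mulVecLin_submatrix_cols_le [CommSemiring R] [Fintype n] [Fintype n₀]
    (A : Matrix m n R) (c : n₀ → n) :
    LinearMap.range (A.submatrix id c).mulVecLin ≤ LinearMap.range A.mulVecLin := by
  rw [range_mulVecLin, range_mulVecLin]
  exact Submodule.span_mono (Set.range_subset_iff.2 fun j => ⟨c j, rfl⟩)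

variable [Field K] [Fintype n]

theorem rank_submatrix_eq_of_rank_submatrix_cols_eq [Fintype n₀] (A : Matrix m n K)
    (r : m₀ → m) (c : n₀ → n) (hc : (A.submatrix id c).rank = A.rank) :
    (A.submatrix r c).rank = (A.submatrix r id).rank := by
  have hrange : LinearMap.range (A.submatrix id c).mulVecLin = LinearMap.range A.mulVecLin :=
    Submodule.eq_of_le_of_finrank_eq (A.range_mulVecLin_submatrix_cols_le c) hc
  rw [rank, rank, show A.submatrix r c = (A.submatrix id c).submatrix r id from rfl,
    range_mulVecLin_submatrix_rows, range_mulVecLin_submatrix_rows, hrange]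

theorem exists_finset_rank_submatrix_eq_card [Finite m] (A : Matrix m n K) :
    ∃ S : Finset m, (A.submatrix ((↑) : S → m) id).rank = S.card ∧ A.rank = S.card := by
  obtain ⟨b, -, -, hspan, hli⟩ :=
    exists_linearIndepOn_extension (linearIndepOn_empty K A.row) (Set.subset_univ _)
  obtain ⟨S, rfl⟩ := b.toFinite.exists_finset_coe
  have hrows : (A.submatrix ((↑) : S → m) id).rank = S.card := by
    rw [rank_eq_finrank_span_row]
    exact (finrank_span_eq_card hli).trans (Fintype.card_coe S)
  have hspan' : Submodule.span K (Set.range (A.submatrix ((↑) : S → m) id).row) =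
      Submodule.span K (Set.range A.row) := by
    refine le_antisymm (Submodule.span_mono (Set.range_subset_iff.2 fun i => ⟨i, rfl⟩)) ?_
    rw [Set.image_univ, Set.image_eq_range] at hspan
    exact Submodule.span_le.2 hspan
  refine ⟨S, hrows, ?_⟩
  rw [← hrows, rank_eq_finrank_span_row, rank_eq_finrank_span_row, hspan']

theorem det_ne_zero_of_rank_eq_card [DecidableEq n] {A : Matrix n n K}
    (h : A.rank = Fintype.card n) : A.det ≠ 0 := by
  have htop : LinearMap.range A.mulVecLin = ⊤ :=
    Submodule.eq_top_of_finrank_eq (h.trans (finrank_fintype_fun_eq_card K).symm)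
  have hunit : IsUnit A := mulVec_surjective_iff_isUnit.1 (LinearMap.range_eq_top.1 htop)
  exact ((isUnit_iff_isUnit_det A).1 hunit).ne_zero

end Matrix

section Principal

variable {K ι : Type*} [Field K] [Fintype ι]

theorem card_le_rank_of_det_psub_ne_zero [DecidableEq ι] (M : Matrix ι ι K) {S : Finset ι}
    (h : (psub M S).det ≠ 0) : S.card ≤ M.rank :=
  calc S.card = (psub M S).rank := by rw [rank_of_det_ne_zero h, Fintype.card_coe]
    _ ≤ M.rank := rank_submatrix_le M _ _

theorem exists_card_eq_rank_det_psub_ne_zero [DecidableEq ι] (M : Matrix ι ι K)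
    (hM : Mᵀ = M ∨ Mᵀ = -M) : ∃ S : Finset ι, (psub M S).det ≠ 0 ∧ S.card = M.rank := by
  obtain ⟨S, hrows, hcard⟩ := M.exists_finset_rank_submatrix_eq_card
  have hcols : (M.submatrix id ((↑) : S → ι)).rank = M.rank := by
    rw [← rank_transpose, transpose_submatrix]
    rcases hM with h | h
    · rw [h, hrows, hcard]
    · rw [h, submatrix_neg, Pi.neg_apply, Pi.neg_apply, rank_neg, hrows, hcard]
  refine ⟨S, det_ne_zero_of_rank_eq_card ?_, hcard.symm⟩
  rw [psub, rank_submatrix_eq_of_rank_submatrix_cols_eq M _ _ hcols, hrows, Fintype.card_coe]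

end Principal

/-- Lemma 3.1: if `M` is an `n×n` symmetric or skew-symmetric matrix over a field, then
`rank M` is the maximum of `|S|` over all subsets `S ⊆ {1,…,n}` whose principal submatrix
`M[S]` is nonsingular (with `M[∅]` nonsingular by convention, contributing the value `0`). -/
theorem rank_eq_max_card_nonsingular_principal
    {F : Type*} [Field F] {n : ℕ} (M : Matrix (Fin n) (Fin n) F)
    (hM : Mᵀ = M ∨ Mᵀ = -M) :
    M.rank = sSup {k : ℕ | ∃ S : Finset (Fin n), (psub M S).det ≠ 0 ∧ S.card = k} := by
  refine (IsGreatest.csSup_eq ⟨?_, ?_⟩).symm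
  · exact exists_card_eq_rank_det_psub_ne_zero M hM
  · rintro _ ⟨S, hS, rfl⟩
    exact card_le_rank_of_det_psub_ne_zero M hS
end

section
/- Let F be a field, let M be a skew-symmetric matrix over F with rows and columns indexed by a finite set E, and let D(M) = (E, {S ⊆ E : M[S] is nonsingular}). Then for every subset A ⊆ E, the width of the restriction D(M)|_A equals rank(M[A]); that is, max{|S| : S ⊆ A, M[S] nonsingular} − min{|S| : S ⊆ A, M[S] nonsingular} = rank(M[A]) (and since M[∅] is nonsingular the minimum is 0, so max{|S| : S ⊆ A, M[S] nonsingular} = rank(M[A])). -/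
/-!
Every `S ⊆ A` with `M[S]` nonsingular has `|S| = rank M[S] ≤ rank M[A]`, and `M[∅]` is
nonsingular, so it suffices to find a nonsingular principal submatrix of `N = M[A]` of size
`rank N`. Let `S` index a basis of the column space of `N`. Writing `N = N[·,S] Y` shows
`rank N[S,S] = rank N[S,·]`, and by skew-symmetry the rows of `N[S,·]` are the negated columns
`S` of `N`, hence independent; so `N[S,S]` has full rank `|S| = rank N`.
-/

open Matrix Submodule

namespace Matrix

variable {F : Type*} [Field F] {l m n κ : Type*}

def IsColumnBasis (N : Matrix m n F) (c : κ → n) : Prop :=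
  LinearIndependent F (fun k => N.col (c k)) ∧
    ∀ j, N.col j ∈ span F (Set.range fun k => N.col (c k))

theorem exists_eq_submatrix_mul_of_col_mem_span [Fintype κ] {N : Matrix m n F} {c : κ → n}
    (h : ∀ j, N.col j ∈ span F (Set.range fun k => N.col (c k))) :
    ∃ Y : Matrix κ n F, N = N.submatrix id c * Y := by
  choose Y hY using fun j => (mem_span_range_iff_exists_fun F).mp (h j)
  refine ⟨(of Y)ᵀ, ?_⟩
  ext i j
  simpa [Matrix.mul_apply, mul_comm] using (congrFun (hY j) i).symm

theorem rank_submatrix_eq_of_col_mem_span [Fintype n] [Fintype κ] {N : Matrix m n F}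
    {c : κ → n} (h : ∀ j, N.col j ∈ span F (Set.range fun k => N.col (c k))) (r : l → m) :
    (N.submatrix r c).rank = (N.submatrix r id).rank := by
  obtain ⟨Y, hY⟩ := exists_eq_submatrix_mul_of_col_mem_span h
  refine le_antisymm (rank_submatrix_le (N.submatrix r id) id c) ?_
  calc (N.submatrix r id).rank = (N.submatrix r c * Y).rank := by
        conv_lhs => rw [hY]
        rfl
    _ ≤ (N.submatrix r c).rank := rank_mul_le_left _ _

theorem rank_eq_card_iff_det_ne_zero [Fintype κ] [DecidableEq κ] (A : Matrix κ κ F) :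
    A.rank = Fintype.card κ ↔ A.det ≠ 0 := by
  rw [rank_eq_finrank_span_cols, ← Set.finrank, eq_comm,
    ← linearIndependent_iff_card_eq_finrank_span,
    linearIndependent_cols_iff_isUnit, isUnit_iff_isUnit_det, isUnit_iff_ne_zero]

namespace IsColumnBasis

variable [Fintype κ] {c : κ → n}

theorem rank_eq_card [Fintype n] {N : Matrix m n F} (hc : N.IsColumnBasis c) :
    N.rank = Fintype.card κ := by
  have hspan : span F (Set.range N.col) = span F (Set.range fun k => N.col (c k)) :=
    le_antisymm (span_le.mpr (Set.range_subset_iff.mpr hc.2))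
      (span_mono (Set.range_comp_subset_range c N.col))
  rw [rank_eq_finrank_span_cols, hspan, finrank_span_eq_card hc.1]

theorem det_submatrix_ne_zero_of_transpose_eq_neg [Fintype n] [DecidableEq κ]
    {N : Matrix n n F} (hc : N.IsColumnBasis c) (hN : Nᵀ = -N) : (N.submatrix c c).det ≠ 0 := by
  have hrows : (N.submatrix c id).row = -fun k => N.col (c k) := by
    ext k j
    simpa using congrFun (congrFun hN j) (c k)
  rw [← rank_eq_card_iff_det_ne_zero, rank_submatrix_eq_of_col_mem_span hc.2,
    LinearIndependent.rank_matrix (hrows ▸ hc.1.neg)]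

end IsColumnBasis

end Matrix

section Principal

variable {F E : Type*} [Field F] [DecidableEq E] {M : Matrix E E F}

theorem card_le_rank_psub_of_det_ne_zero {S A : Finset E} (hSA : S ⊆ A)
    (hS : (psub M S).det ≠ 0) : S.card ≤ (psub M A).rank := by
  let c : ↥S → ↥A := fun x => ⟨x, hSA x.2⟩
  calc S.card = (psub M S).rank := by
        rw [(rank_eq_card_iff_det_ne_zero _).mpr hS, Fintype.card_coe]
    _ ≤ (psub M A).rank := rank_submatrix_le (psub M A) c c

theorem exists_subset_det_psub_ne_zero_card_eq_rank (hM : Mᵀ = -M) (A : Finset E) :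
    ∃ S ⊆ A, (psub M S).det ≠ 0 ∧ S.card = (psub M A).rank := by
  let v : E → ↥A → F := fun j i => M i j
  obtain ⟨S, hSA, -, hspan, hli⟩ :=
    exists_linearIndepOn_extension (linearIndepOn_empty F v) (Set.empty_subset (A : Set E))
  lift S to Finset E using A.finite_toSet.subset hSA
  replace hSA : S ⊆ A := Finset.coe_subset.mp hSA
  let c : ↥S → ↥A := fun x => ⟨x, hSA x.2⟩
  have hc : (psub M A).IsColumnBasis c := by
    refine ⟨hli, fun j => ?_⟩
    have hj := hspan ⟨j, j.2, rfl⟩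
    rw [Set.image_eq_range] at hj
    exact hj
  have hskew : (psub M A)ᵀ = -psub M A := by
    rw [psub, transpose_submatrix, hM]
    rfl
  refine ⟨S, hSA, hc.det_submatrix_ne_zero_of_transpose_eq_neg hskew, ?_⟩
  rw [hc.rank_eq_card, Fintype.card_coe]

end Principal

theorem width_restriction_eq_rank_general
    {F : Type*} [Field F] {E : Type*} [DecidableEq E]
    (M : Matrix E E F) (hM : Mᵀ = -M) (A : Finset E) :
    sSup {k : ℕ | ∃ S : Finset E, (S ⊆ A ∧ (psub M S).det ≠ 0) ∧ S.card = k}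
        - sInf {k : ℕ | ∃ S : Finset E, (S ⊆ A ∧ (psub M S).det ≠ 0) ∧ S.card = k}
        = (psub M A).rank
    ∧ sSup {k : ℕ | ∃ S : Finset E, (S ⊆ A ∧ (psub M S).det ≠ 0) ∧ S.card = k}
        = (psub M A).rank := by
  set T := {k : ℕ | ∃ S : Finset E, (S ⊆ A ∧ (psub M S).det ≠ 0) ∧ S.card = k}
  have hzero : 0 ∈ T := ⟨∅, ⟨A.empty_subset, by simp [psub]⟩, rfl⟩
  obtain ⟨S, hSA, hS, hcard⟩ := exists_subset_det_psub_ne_zero_card_eq_rank hM A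
  have hsup : sSup T = (psub M A).rank := IsGreatest.csSup_eq ⟨⟨S, ⟨hSA, hS⟩, hcard⟩,
    by rintro _ ⟨S, ⟨hSA, hS⟩, rfl⟩; exact card_le_rank_psub_of_det_ne_zero hSA hS⟩
  have hinf : sInf T = 0 := Nat.sInf_eq_zero.mpr (Or.inl hzero)
  exact ⟨by rw [hsup, hinf, Nat.sub_zero], hsup⟩

/-- Lemma 3.2: let `M` be a skew-symmetric matrix over a field `F` with rows and columns
indexed by a finite set `E`, and let `D(M)` be the delta-matroid whose feasible sets are
the `S ⊆ E` with `M[S]` nonsingular.  For every `A ⊆ E`, the width of the restriction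
`D(M)|_A` equals `rank M[A]`: that is,
`max{|S| : S ⊆ A, M[S] nonsingular} − min{|S| : S ⊆ A, M[S] nonsingular} = rank M[A]`,
and (since `M[∅]` is nonsingular, the minimum is `0`)
`max{|S| : S ⊆ A, M[S] nonsingular} = rank M[A]`. -/
theorem width_restriction_eq_rank
    {F : Type*} [Field F] {E : Type*} [Fintype E] [DecidableEq E]
    (M : Matrix E E F) (hM : Mᵀ = -M) (A : Finset E) :
    sSup {k : ℕ | ∃ S : Finset E, (S ⊆ A ∧ (psub M S).det ≠ 0) ∧ S.card = k}
        - sInf {k : ℕ | ∃ S : Finset E, (S ⊆ A ∧ (psub M S).det ≠ 0) ∧ S.card = k}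
        = (psub M A).rank
    ∧ sSup {k : ℕ | ∃ S : Finset E, (S ⊆ A ∧ (psub M S).det ≠ 0) ∧ S.card = k}
        = (psub M A).rank :=
  width_restriction_eq_rank_general M hM A
end

section
/- Let G be a looped simple graph with adjacency matrix M over 𝔽₂. Then for every subset A ⊆ V(G), the width of the twist D(G)*A satisfies w(D(G)*A) = rank(M[A]) + rank(M[Aᶜ]) (ranks over 𝔽₂, with Aᶜ = V(G)∖A). Consequently, the twist polynomial of G satisfies T_G(z) = Σ_{A ⊆ V(G)} z^{rank(M[A]) + rank(M[Aᶜ])}. -/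
/-!
A feasible set of `D(M) * A` is `F ∆ A` with `M[F]` nonsingular, and
`|F ∆ A| = |A| - |F ∩ A| + |F \ A|`. Deleting a row and a column lowers the rank by at most
two, so a nonsingular `M[F]` forces `|F ∩ B| ≤ rank M[B] + |F \ B|` for every `B`; taking
`B = A` and `B = Aᶜ` bounds `|F ∆ A|` between `|A| - rank M[A]` and `|A| + rank M[Aᶜ]`.
Both bounds are attained because every symmetric matrix of rank `r` has a nonsingular
principal `r × r` submatrix.
-/

open Matrix Polynomial

/-- The width of a set system on a finite ground set, given by the predicate `P` describing
its feasible sets: the maximum cardinality of a feasible set minus the minimum cardinality. -/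
noncomputable def sysWidth {V : Type*} (P : Finset V → Prop) : ℕ :=
  sSup {k | ∃ S, P S ∧ S.card = k} - sInf {k | ∃ S, P S ∧ S.card = k}

/-- The width of the twist `D(M) * A`, where `D(M)` is the delta-matroid of the
symmetric matrix `M` (feasible sets = index sets of nonsingular principal submatrices):
a set `S` is feasible in `D(M) * A` iff `S ∆ A` is feasible in `D(M)`. -/
noncomputable def twistWidth {R V : Type*} [CommRing R] [DecidableEq V]
    (M : Matrix V V R) (A : Finset V) : ℕ :=
  sysWidth fun S => (psub M (symmDiff S A)).det ≠ 0

/-- The twist polynomial of the looped simple graph with adjacency matrix `M` over `𝔽₂`: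
`T_G(z) = Σ_{A ⊆ V(G)} z^{w(D(G)*A)}`. -/
noncomputable def twistPoly {R V : Type*} [CommRing R] [Fintype V] [DecidableEq V]
    (M : Matrix V V R) : Polynomial ℤ :=
  ∑ A : Finset V, (X : Polynomial ℤ) ^ twistWidth M A

open Module Submodule

namespace Matrix

variable {K m n α : Type*} [Field K] [Fintype m] [Fintype n] [Fintype α]

theorem rank_le_rank_submatrix_col_add (N : Matrix m n K) {f : α → n}
    (hf : Function.Injective f) :
    N.rank ≤ (N.submatrix id f).rank + (Fintype.card n - Fintype.card α) := by
  classical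
  let g : ↥(Set.range f)ᶜ → n := (↑)
  have hcols :
      Set.range N.col ⊆ Set.range (N.submatrix id f).col ∪ Set.range (N.col ∘ g) := by
    rintro - ⟨j, rfl⟩
    by_cases hj : j ∈ Set.range f
    · obtain ⟨a, rfl⟩ := hj
      exact Or.inl ⟨a, rfl⟩
    · exact Or.inr ⟨⟨j, hj⟩, rfl⟩
  have hcard : Fintype.card ↥(Set.range f)ᶜ = Fintype.card n - Fintype.card α := by
    rw [Fintype.card_compl_set, Set.card_range_of_injective hf]
  rw [rank_eq_finrank_span_cols, rank_eq_finrank_span_cols, ← hcard]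
  calc finrank K (span K (Set.range N.col))
      ≤ finrank K (span K (Set.range (N.submatrix id f).col) ⊔
          span K (Set.range (N.col ∘ g)) : Submodule K (m → K)) := by
        rw [← span_union]
        exact finrank_mono (span_mono hcols)
    _ ≤ _ := finrank_add_le_finrank_add_finrank _ _
    _ ≤ _ := Nat.add_le_add_left (finrank_range_le_card _) _

theorem rank_le_rank_submatrix_row_add (N : Matrix m n K) {f : α → m}
    (hf : Function.Injective f) :
    N.rank ≤ (N.submatrix f id).rank + (Fintype.card m - Fintype.card α) := by
  simpa [← transpose_submatrix] using Nᵀ.rank_le_rank_submatrix_col_add hf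

theorem rank_le_rank_submatrix_add (N : Matrix m m K) {f : α → m} (hf : Function.Injective f) :
    N.rank ≤ (N.submatrix f f).rank + 2 * (Fintype.card m - Fintype.card α) := by
  have hcol := N.rank_le_rank_submatrix_col_add hf
  have hrow := (N.submatrix id f).rank_le_rank_submatrix_row_add hf
  rw [submatrix_submatrix, Function.id_comp, Function.comp_id] at hrow
  omega

end Matrix

section PrincipalSubmatrix

variable {K V : Type*} [Field K]

theorem rank_psub_le_card (M : Matrix V V K) (s : Finset V) : (psub M s).rank ≤ s.card :=
  (rank_le_card_width _).trans_eq (Fintype.card_coe s)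

theorem rank_psub_mono (M : Matrix V V K) {s t : Finset V} (h : s ⊆ t) :
    (psub M s).rank ≤ (psub M t).rank :=
  rank_submatrix_le (psub M t) (fun x : s => ⟨x, h x.2⟩) (fun x : s => ⟨x, h x.2⟩)

theorem card_inter_le_rank_psub_add_card_sdiff [DecidableEq V] (M : Matrix V V K) {F : Finset V}
    (hF : (psub M F).det ≠ 0) (B : Finset V) :
    (F ∩ B).card ≤ (psub M B).rank + (F \ B).card := by
  have hsub : F ∩ B ⊆ F := Finset.inter_subset_left
  have hinj : Function.Injective fun x : ↥(F ∩ B) => (⟨x, hsub x.2⟩ : F) :=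
    fun _ _ hxy => Subtype.ext (congrArg Subtype.val hxy :)
  have hdrop := (psub M F).rank_le_rank_submatrix_add hinj
  rw [rank_of_det_ne_zero hF, Fintype.card_coe, Fintype.card_coe] at hdrop
  have hmono := rank_psub_mono M (Finset.inter_subset_right : F ∩ B ⊆ B)
  have hsplit := Finset.card_sdiff_add_card_inter F B
  change F.card ≤ (psub M (F ∩ B)).rank + _ at hdrop
  omega

theorem Matrix.IsSymm.exists_subset_det_psub_ne_zero [DecidableEq V] {M : Matrix V V K}
    (hM : M.IsSymm) (A : Finset V) :
    ∃ F ⊆ A, (psub M F).det ≠ 0 ∧ F.card = (psub M A).rank := by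
  let v : V → (A → K) := fun i j => M i j
  obtain ⟨I, hIA, -, hspan, hli⟩ :=
    exists_linearIndepOn_extension (linearIndepOn_empty K v) (Set.empty_subset (A : Set V))
  lift I to Finset V using A.finite_toSet.subset hIA with F
  have hFA : F ⊆ A := Finset.coe_subset.1 hIA
  let R : Matrix F A K := (psub M A).submatrix (fun x => ⟨x, hFA x.2⟩) id
  have hexp : ∀ j : A, ∃ c : F → K, ∑ k, c k • R k = psub M A j := by
    intro j
    refine (mem_span_range_iff_exists_fun K).1 ?_
    have hj := hspan ⟨j, j.2, rfl⟩
    rwa [Set.image_eq_range] at hj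
  choose C' hC using hexp
  let C : Matrix A F K := C'
  have hAR : psub M A = C * R := by
    ext j a
    simpa [mul_apply, Finset.sum_apply] using (congrFun (hC j) a).symm
  -- symmetry turns the row relations `M[A] = C * R` into column relations
  have hRF : R = psub M F * Cᵀ := by
    ext i a
    have h := congrFun (hC a) ⟨i, hFA i.2⟩
    simp only [Finset.sum_apply, Pi.smul_apply, smul_eq_mul] at h
    simp only [R, C, psub, submatrix_apply, mul_apply, id] at h ⊢
    rw [hM.apply, ← h]
    exact Finset.sum_congr rfl fun k _ => by rw [hM.apply, mul_comm]; rfl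
  have hli' : LinearIndependent K R.row := hli
  have hrank : R.rank = F.card := by rw [hli'.rank_matrix, Fintype.card_coe]
  refine ⟨F, hFA, ?_, le_antisymm ?_ ?_⟩
  · rw [← isUnit_iff_ne_zero, ← isUnit_iff_isUnit_det, ← linearIndependent_rows_iff_isUnit]
    refine LinearIndependent.of_comp Cᵀ.vecMulLinear ?_
    convert hli' using 1
    rw [hRF]
    rfl
  · exact hrank ▸ rank_submatrix_le _ _ _
  · rw [hAR]
    exact (rank_mul_le_right C R).trans hrank.le

end PrincipalSubmatrix

theorem Finset.card_symmDiff_eq_card_sdiff_add_card_sdiff {α : Type*} [DecidableEq α]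
    (s t : Finset α) : (symmDiff s t).card = (s \ t).card + (t \ s).card := by
  rw [symmDiff_def, Finset.sup_eq_union, Finset.card_union_of_disjoint disjoint_sdiff_sdiff]

theorem sysWidth_eq_of_card_bounds {V : Type*} {P : Finset V → Prop} {a b : ℕ}
    (hmin : ∃ S, P S ∧ S.card = a) (hmax : ∃ S, P S ∧ S.card = b)
    (hbounds : ∀ S, P S → a ≤ S.card ∧ S.card ≤ b) : sysWidth P = b - a := by
  have hsup : IsGreatest {k | ∃ S, P S ∧ S.card = k} b := by
    refine ⟨hmax, ?_⟩
    rintro - ⟨S, hS, rfl⟩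
    exact (hbounds S hS).2
  have hinf : IsLeast {k | ∃ S, P S ∧ S.card = k} a := by
    refine ⟨hmin, ?_⟩
    rintro - ⟨S, hS, rfl⟩
    exact (hbounds S hS).1
  rw [sysWidth, hsup.csSup_eq, hinf.csInf_eq]

section Twist

variable {K V : Type*} [Field K] [DecidableEq V]

theorem card_sub_rank_psub_le_card_symmDiff (M : Matrix V V K) {F : Finset V}
    (hF : (psub M F).det ≠ 0) (A : Finset V) :
    A.card - (psub M A).rank ≤ (symmDiff F A).card := by
  have hkey := card_inter_le_rank_psub_add_card_sdiff M hF A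
  have hA := Finset.card_sdiff_add_card_inter A F
  rw [Finset.inter_comm] at hA
  rw [Finset.card_symmDiff_eq_card_sdiff_add_card_sdiff]
  omega

variable [Fintype V]

theorem card_symmDiff_le_card_add_rank_psub_compl (M : Matrix V V K) {F : Finset V}
    (hF : (psub M F).det ≠ 0) (A : Finset V) :
    (symmDiff F A).card ≤ A.card + (psub M Aᶜ).rank := by
  have hkey := card_inter_le_rank_psub_add_card_sdiff M hF Aᶜ
  have hA := Finset.card_sdiff_add_card_inter A F
  rw [← Finset.sdiff_eq_inter_compl, sdiff_compl, Finset.inf_eq_inter] at hkey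
  rw [Finset.inter_comm] at hA
  rw [Finset.card_symmDiff_eq_card_sdiff_add_card_sdiff]
  omega

theorem twistWidth_eq_rank_psub_add_rank_psub_compl {M : Matrix V V K} (hM : M.IsSymm)
    (A : Finset V) : twistWidth M A = (psub M A).rank + (psub M Aᶜ).rank := by
  obtain ⟨F₁, hF₁A, hF₁, hcard₁⟩ := hM.exists_subset_det_psub_ne_zero A
  obtain ⟨F₂, hF₂A, hF₂, hcard₂⟩ := hM.exists_subset_det_psub_ne_zero Aᶜ
  have hdisj : Disjoint F₂ A := Finset.disjoint_left.2 fun x hx => Finset.mem_compl.1 (hF₂A hx)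
  have hrank := rank_psub_le_card M A
  suffices twistWidth M A = (A.card + (psub M Aᶜ).rank) - (A.card - (psub M A).rank) by omega
  refine sysWidth_eq_of_card_bounds ⟨symmDiff F₁ A, ?_, ?_⟩ ⟨symmDiff F₂ A, ?_, ?_⟩
    fun S hS => ?_
  · rwa [symmDiff_symmDiff_cancel_right]
  · rw [symmDiff_of_le hF₁A, Finset.card_sdiff_of_subset hF₁A, hcard₁]
  · rwa [symmDiff_symmDiff_cancel_right]
  · rw [hdisj.symmDiff_eq_sup, Finset.sup_eq_union, Finset.card_union_of_disjoint hdisj, hcard₂,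
      add_comm]
  · have hlow := card_sub_rank_psub_le_card_symmDiff M hS A
    have hup := card_symmDiff_le_card_add_rank_psub_compl M hS A
    rw [symmDiff_symmDiff_cancel_right] at hlow hup
    exact ⟨hlow, hup⟩

end Twist

/-- Proposition 3.3: for a looped simple graph `G` with adjacency matrix `M` over `𝔽₂`,
`w(D(G)*A) = rank M[A] + rank M[Aᶜ]` for every `A ⊆ V(G)`, and consequently
`T_G(z) = Σ_{A ⊆ V(G)} z^{rank M[A] + rank M[Aᶜ]}`. -/
theorem twistPoly_eq_sum_rank
    {V : Type*} [Fintype V] [DecidableEq V]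
    (M : Matrix V V (ZMod 2)) (hM : M.IsSymm) :
    (∀ A : Finset V, twistWidth M A = (psub M A).rank + (psub M Aᶜ).rank)
    ∧ twistPoly M
        = ∑ A : Finset V, (X : Polynomial ℤ) ^ ((psub M A).rank + (psub M Aᶜ).rank) := by
  have hwidth := twistWidth_eq_rank_psub_add_rank_psub_compl hM
  exact ⟨hwidth, Finset.sum_congr rfl fun A _ => by rw [hwidth]⟩
end

section
/- Let G1 be the looped simple graph with exactly two vertices w and v1 connected by an edge, where w is unlooped. Let G2 be any looped simple graph with a vertex v2 having the same loop status as v1. Then T_{(G1,v1)∨(G2,v2)}(z) = T_{G2}(z) + 2z²·T_{G2−v2}(z). -/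
/-!
Write `w` for the leaf and `v` for the vertex it is attached to. A principal submatrix of the
join containing `w` is nonsingular iff it also contains `v` and the principal submatrix of `G` on
the remaining vertices is nonsingular (expand along `w`). So the feasible sets of the join are
those of `D(G)` and the sets `F ∪ {v, w}` with `v ∉ F ∈ D(G)`.

For `A ⊆ V(G)`, twist by `A` or by `A ∪ {w}` and compare the distances `|F △ ·|`. If exactly one
of `v`, `w` is in the twist, the new feasible sets only repeat distances realised by `D(G)`, and
the width is that of `D(G) * A`. Otherwise the distances are those of `D(G)` together with the
distances of the sets avoiding `v` shifted by `2`. Symmetric matrices have the exchange property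
(if `M[F]` is nonsingular and `v ∈ F`, then `M[F - v]` or some `M[F - v - u]` is nonsingular), so
each distance of a set containing `v` lies at most `2` above a distance of a set avoiding `v`,
and the width is `w(D(G - v) * (A - v)) + 2`. Every twist of `G - v` arises from two sets `A`,
which gives the term `2z²T_{G-v}`.
-/

open Matrix Polynomial

/-- Vertex deletion `G - v`: delete the row and column of the adjacency matrix at `v`. -/
def vdel {R V : Type*} (M : Matrix V V R) (v : V) :
    Matrix {u : V // u ≠ v} {u : V // u ≠ v} R :=
  M.submatrix Subtype.val Subtype.val

/-- Loop complementation `G + v`: add `1` to the diagonal entry at `v` (over `𝔽₂`). -/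
def lcomp {V : Type*} [DecidableEq V] (M : Matrix V V (ZMod 2)) (v : V) :
    Matrix V V (ZMod 2) :=
  M + Matrix.single v v 1

/-- The adjacency matrix of the one-point join `(G1,v1) ∨ (G2,v2)`: the vertex set is
the disjoint union of `V(G1) \ {v1}` and `V(G2)`, where `Sum.inr v2` plays the role of
the identified vertex `v`; it inherits the loop status and all adjacencies of `v1` and
`v2`, and no vertex of `G1 - v1` is adjacent to a vertex of `G2 - v2`. -/
def onePointJoin {V1 V2 : Type*} [DecidableEq V2] (M1 : Matrix V1 V1 (ZMod 2)) (v1 : V1)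
    (M2 : Matrix V2 V2 (ZMod 2)) (v2 : V2) :
    Matrix ({u : V1 // u ≠ v1} ⊕ V2) ({u : V1 // u ≠ v1} ⊕ V2) (ZMod 2) :=
  Matrix.of fun i j =>
    match i, j with
    | Sum.inl a, Sum.inl b => M1 a.1 b.1
    | Sum.inl a, Sum.inr b => if b = v2 then M1 a.1 v1 else 0
    | Sum.inr a, Sum.inl b => if a = v2 then M1 v1 b.1 else 0
    | Sum.inr a, Sum.inr b => M2 a b

open scoped symmDiff
open Finset

lemma Matrix.IsSymm.dotProduct_mulVec_comm {R V : Type*} [CommSemiring R] [Fintype V]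
    {M : Matrix V V R} (hM : M.IsSymm) (x y : V → R) : x ⬝ᵥ (M *ᵥ y) = (M *ᵥ x) ⬝ᵥ y := by
  rw [dotProduct_mulVec, ← mulVec_transpose, hM.eq]

lemma Matrix.IsSymm.mul_mulVec_apply_eq_zero {R V : Type*} [CommSemiring R] [Fintype V]
    {M : Matrix V V R} (hM : M.IsSymm) {S : Finset V} {x y : V → R} {u : V}
    (hx : ∀ j ∉ S, x j = 0) (hMx : ∀ i ∈ S, (M *ᵥ x) i = 0) (hy : ∀ j ∉ S, y j = 0)
    (hMy : ∀ i ∈ S, i ≠ u → (M *ᵥ y) i = 0) : x u * (M *ᵥ y) u = 0 := by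
  have h := hM.dotProduct_mulVec_comm x y
  rwa [dotProduct, sum_eq_single u, dotProduct, sum_eq_zero] at h
  · intro i _
    by_cases hi : i ∈ S
    · rw [hMx i hi, zero_mul]
    · rw [hy i hi, mul_zero]
  · intro i _ hiu
    by_cases hi : i ∈ S
    · rw [hMy i hi hiu, mul_zero]
    · rw [hx i hi, zero_mul]
  · exact fun h => absurd (mem_univ u) h

lemma psub_mulVec_of_support_subset {R V : Type*} [NonUnitalNonAssocSemiring R] [Fintype V]
    (M : Matrix V V R) {S : Finset V} {x : V → R} (hx : ∀ j ∉ S, x j = 0) (i : S) :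
    (psub M S *ᵥ fun j => x j) i = (M *ᵥ x) i := by
  simp only [mulVec, dotProduct, psub, submatrix_apply]
  rw [sum_coe_sort S fun j => M i j * x j]
  exact sum_subset (subset_univ S) fun j _ hj => by rw [hx j hj, mul_zero]

section PrincipalMinors

variable {K V : Type*} [Field K] [Fintype V] [DecidableEq V]

theorem det_psub_eq_zero_iff (M : Matrix V V K) (S : Finset V) :
    (psub M S).det = 0 ↔
      ∃ x : V → K, x ≠ 0 ∧ (∀ j ∉ S, x j = 0) ∧ ∀ i ∈ S, (M *ᵥ x) i = 0 := by
  rw [← exists_mulVec_eq_zero_iff]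
  constructor
  · rintro ⟨y, hy, hMy⟩
    let x : V → K := fun j => if h : j ∈ S then y ⟨j, h⟩ else 0
    have hxS : ∀ j ∉ S, x j = 0 := fun j hj => dif_neg hj
    have hxy : (fun j : S => x j) = y := funext fun j => dif_pos j.2
    refine ⟨x, fun hx => hy ?_, hxS, fun i hi => ?_⟩
    · rw [← hxy, hx]
      rfl
    · rw [← psub_mulVec_of_support_subset M hxS ⟨i, hi⟩, hxy, hMy]
      rfl
  · rintro ⟨x, hx, hxS, hMx⟩
    refine ⟨fun j : S => x j, fun h => hx (funext fun j => ?_), funext fun i => ?_⟩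
    · by_cases hj : j ∈ S
      · exact congrFun h ⟨j, hj⟩
      · exact hxS j hj
    · rw [psub_mulVec_of_support_subset M hxS]
      exact hMx i i.2

theorem exists_det_psub_erase_erase_ne_zero {M : Matrix V V K} (hM : M.IsSymm) {F : Finset V}
    {v : V} (hF : (psub M F).det ≠ 0) (hFv : (psub M (F.erase v)).det = 0) :
    ∃ u ∈ F.erase v, (psub M ((F.erase v).erase u)).det ≠ 0 := by
  have mulVec_ne_zero : ∀ z : V → K, z ≠ 0 → (∀ j ∉ F, z j = 0) →
      (∀ i ∈ F.erase v, (M *ᵥ z) i = 0) → (M *ᵥ z) v ≠ 0 := by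
    intro z hz hzF hMz hMzv
    refine hF ((det_psub_eq_zero_iff M F).2 ⟨z, hz, hzF, fun i hi => ?_⟩)
    by_cases hiv : i = v
    · rwa [hiv]
    · exact hMz i (mem_erase.2 ⟨hiv, hi⟩)
  obtain ⟨x, hx, hxS, hMx⟩ := (det_psub_eq_zero_iff M _).1 hFv
  obtain ⟨u, hxu⟩ := Function.ne_iff.1 hx
  have hu : u ∈ F.erase v := by
    by_contra h
    exact hxu (hxS u h)
  refine ⟨u, hu, fun hG => ?_⟩
  obtain ⟨y, hy, hyS, hMy⟩ := (det_psub_eq_zero_iff M _).1 hG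
  have hxF : ∀ j ∉ F, x j = 0 := fun j hj => hxS j fun h => hj (mem_of_mem_erase h)
  have hyF : ∀ j ∉ F, y j = 0 := fun j hj =>
    hyS j fun h => hj (mem_of_mem_erase (mem_of_mem_erase h))
  have hMyu : (M *ᵥ y) u = 0 :=
    (mul_eq_zero.1 (hM.mul_mulVec_apply_eq_zero hxS hMx (fun j hj => hyS j fun h =>
      hj (mem_of_mem_erase h)) fun i hi hiu => hMy i (mem_erase.2 ⟨hiu, hi⟩))).resolve_left hxu
  have hMy' : ∀ i ∈ F.erase v, (M *ᵥ y) i = 0 := fun i hi => by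
    by_cases hiu : i = u
    · rwa [hiu]
    · exact hMy i (mem_erase.2 ⟨hiu, hi⟩)
  have hMyv := mulVec_ne_zero y hy hyF hMy'
  -- eliminating the `v`-coordinate of `M x` and `M y` leaves a null vector of `M[F]`
  refine mulVec_ne_zero ((M *ᵥ y) v • x - (M *ᵥ x) v • y) (fun h => hxu ?_) (fun j hj => ?_)
    (fun i hi => ?_) ?_
  · simpa [hyS u (notMem_erase u _), hMyv] using congrFun h u
  · simp [hxF j hj, hyF j hj]
  · simp [mulVec_sub, mulVec_smul, hMx i hi, hMy' i hi]
  · simp [mulVec_sub, mulVec_smul, mul_comm]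

end PrincipalMinors

lemma card_symmDiff_eq_card_erase_symmDiff_erase_add {V : Type*} [DecidableEq V]
    (F C : Finset V) (v : V) :
    #(F ∆ C) = #(F.erase v ∆ C.erase v) + if v ∈ F ↔ v ∈ C then 0 else 1 := by
  have h : F.erase v ∆ C.erase v = (F ∆ C).erase v := by
    ext
    simp only [mem_symmDiff, mem_erase]
    tauto
  rw [h]
  by_cases hv : v ∈ F ↔ v ∈ C
  · rw [if_pos hv, add_zero, erase_eq_of_notMem]
    simp only [mem_symmDiff]
    tauto
  · rw [if_neg hv, card_erase_add_one]
    simp only [mem_symmDiff]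
    tauto

noncomputable def spread (K : Set ℕ) : ℕ := sSup K - sInf K

lemma spread_eq_of_isLeast_of_isGreatest {K : Set ℕ} {a b : ℕ} (ha : IsLeast K a)
    (hb : IsGreatest K b) : spread K = b - a := by
  rw [spread, ha.csInf_eq, hb.csSup_eq]

lemma isGreatest_sSup_of_bddAbove {K : Set ℕ} (hK : K.Nonempty) (hKb : BddAbove K) :
    IsGreatest K (sSup K) :=
  ⟨Nat.sSup_mem hK hKb, fun _ hk => le_csSup hKb hk⟩

lemma spread_image_add {K : Set ℕ} (hK : K.Nonempty) (hKb : BddAbove K) (n : ℕ) :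
    spread ((· + n) '' K) = spread K := by
  have hmono : Monotone (· + n : ℕ → ℕ) := fun _ _ h => Nat.add_le_add_right h n
  rw [spread_eq_of_isLeast_of_isGreatest (hmono.map_isLeast (isLeast_csInf hK))
    (hmono.map_isGreatest (isGreatest_sSup_of_bddAbove hK hKb)), spread]
  omega

lemma spread_union_image_add {O D : Set ℕ} (hO : O.Nonempty) (hOb : BddAbove O) (hOD : O ⊆ D)
    (n : ℕ) (hD : ∀ d ∈ D, ∃ o ∈ O, o ≤ d ∧ d ≤ o + n) :
    spread (D ∪ (· + n) '' O) = spread O + n := by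
  have ha := isLeast_csInf hO
  have hb := isGreatest_sSup_of_bddAbove hO hOb
  have hab : sInf O ≤ sSup O := ha.2 hb.1
  rw [spread_eq_of_isLeast_of_isGreatest (a := sInf O) (b := sSup O + n), spread]
  · omega
  · refine ⟨Or.inl (hOD ha.1), ?_⟩
    rintro k (hk | ⟨o, ho, rfl⟩)
    · obtain ⟨o, ho, hok, -⟩ := hD k hk
      exact (ha.2 ho).trans hok
    · exact (ha.2 ho).trans (Nat.le_add_right o n)
  · refine ⟨Or.inr ⟨_, hb.1, rfl⟩, ?_⟩
    rintro k (hk | ⟨o, ho, rfl⟩)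
    · obtain ⟨o, ho, -, hko⟩ := hD k hk
      exact hko.trans (Nat.add_le_add_right (hb.2 ho) n)
    · exact Nat.add_le_add_right (hb.2 ho) n

section SetSystem

variable {R V : Type*} [CommRing R] [DecidableEq V]

def feasibleSets (M : Matrix V V R) : Set (Finset V) := {S | (psub M S).det ≠ 0}

def symmDiffCards (𝓕 : Set (Finset V)) (A : Finset V) : Set ℕ := (fun F => #(F ∆ A)) '' 𝓕

lemma mem_symmDiffCards {𝓕 : Set (Finset V)} {A : Finset V} {k : ℕ} :
    k ∈ symmDiffCards 𝓕 A ↔ ∃ F ∈ 𝓕, #(F ∆ A) = k :=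
  Iff.rfl

lemma twistWidth_eq_spread (M : Matrix V V R) (A : Finset V) :
    twistWidth M A = spread (symmDiffCards (feasibleSets M) A) := by
  have h : {k | ∃ S, (psub M (S ∆ A)).det ≠ 0 ∧ #S = k} = symmDiffCards (feasibleSets M) A := by
    ext k
    constructor
    · rintro ⟨S, hS, rfl⟩
      exact ⟨S ∆ A, hS, by simp only [symmDiff_symmDiff_cancel_right]⟩
    · rintro ⟨F, hF, rfl⟩
      exact ⟨F ∆ A, by rwa [symmDiff_symmDiff_cancel_right], rfl⟩
  rw [twistWidth, sysWidth, h, spread]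

lemma empty_mem_feasibleSets [Nontrivial R] (M : Matrix V V R) : ∅ ∈ feasibleSets M := by
  simp [feasibleSets, psub, det_isEmpty]

lemma bddAbove_symmDiffCards [Finite V] (𝓕 : Set (Finset V)) (A : Finset V) :
    BddAbove (symmDiffCards 𝓕 A) :=
  ((Set.toFinite 𝓕).image _).bddAbove

lemma det_psub_map {W : Type*} [DecidableEq W] (f : V ↪ W) (N : Matrix W W R) (S : Finset V) :
    (psub N (S.map f)).det = (psub (N.submatrix f f) S).det := by
  let e : S ≃ S.map f := Equiv.ofBijective (fun x => ⟨f x, mem_map_of_mem f x.2⟩)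
    ⟨fun x y h => Subtype.ext (f.injective (congrArg Subtype.val h)), fun ⟨_, hy⟩ => by
      obtain ⟨x, hx, rfl⟩ := mem_map.1 hy
      exact ⟨⟨x, hx⟩, rfl⟩⟩
  exact (det_submatrix_equiv_self e _).symm

lemma card_map_symmDiff_map {W : Type*} [DecidableEq W] (f : V ↪ W) (s t : Finset V) :
    #(s.map f ∆ t.map f) = #(s ∆ t) := by
  rw [map_eq_image, map_eq_image, ← image_symmDiff _ _ f.injective,
    card_image_of_injective _ f.injective]

lemma symmDiffCards_feasibleSets_vdel [Fintype V] (M : Matrix V V R) (v : V) (C : Finset V) :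
    symmDiffCards (feasibleSets (vdel M v)) (C.subtype (· ≠ v))
      = symmDiffCards {F ∈ feasibleSets M | v ∉ F} (C.erase v) := by
  have hC : (C.subtype (· ≠ v)).map (Function.Embedding.subtype _) = C.erase v := by
    rw [subtype_map, filter_ne']
  ext k
  constructor
  · rintro ⟨F, hF, rfl⟩
    refine ⟨F.map (Function.Embedding.subtype _), ⟨?_, fun h => ?_⟩, ?_⟩
    · exact (det_psub_map _ M F).trans_ne hF
    · obtain ⟨u, -, hu⟩ := mem_map.1 h
      exact u.2 hu
    · simp only [← hC, card_map_symmDiff_map]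
  · rintro ⟨F, ⟨hF, hvF⟩, rfl⟩
    have hF' : (F.subtype (· ≠ v)).map (Function.Embedding.subtype _) = F :=
      subtype_map_of_mem fun u hu huv => hvF (huv ▸ hu)
    refine ⟨F.subtype (· ≠ v), ?_, ?_⟩
    · have h := det_psub_map (Function.Embedding.subtype (· ≠ v)) M (F.subtype (· ≠ v))
      rw [hF'] at h
      exact h.symm.trans_ne hF
    · simp only [← card_map_symmDiff_map (Function.Embedding.subtype (· ≠ v)), hF', hC]

end SetSystem

section Exchange

variable {K V : Type*} [Field K] [Fintype V] [DecidableEq V] {M : Matrix V V K}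

theorem exists_feasible_notMem_card_symmDiff_le (hM : M.IsSymm) {F C : Finset V} {v : V}
    (hF : F ∈ feasibleSets M) (hv : v ∈ F) (hC : v ∉ C) :
    ∃ F' ∈ feasibleSets M, v ∉ F' ∧ #(F' ∆ C) ≤ #(F ∆ C) ∧ #(F ∆ C) ≤ #(F' ∆ C) + 2 := by
  have hFv := card_symmDiff_eq_card_erase_symmDiff_erase_add F C v
  rw [erase_eq_of_notMem hC, if_neg (by tauto)] at hFv
  by_cases h : (psub M (F.erase v)).det = 0
  · obtain ⟨u, -, hu⟩ := exists_det_psub_erase_erase_ne_zero hM hF h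
    refine ⟨_, hu, fun h' => notMem_erase v F (mem_of_mem_erase h'), ?_⟩
    have h1 := card_symmDiff_eq_card_erase_symmDiff_erase_add (F.erase v) C u
    have h2 := card_symmDiff_eq_card_erase_symmDiff_erase_add ((F.erase v).erase u) C u
    rw [erase_idem] at h2
    split_ifs at h1 h2 <;> omega
  · exact ⟨F.erase v, h, notMem_erase v F, by omega, by omega⟩

theorem spread_symmDiffCards_union_image_add_two (hM : M.IsSymm) {v : V} {C : Finset V}
    (hC : v ∉ C) :
    spread (symmDiffCards (feasibleSets M) C ∪
        (· + 2) '' symmDiffCards {F ∈ feasibleSets M | v ∉ F} C)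
      = spread (symmDiffCards {F ∈ feasibleSets M | v ∉ F} C) + 2 := by
  refine spread_union_image_add
    (Set.Nonempty.image _ ⟨∅, (⟨empty_mem_feasibleSets M, notMem_empty v⟩ :
      ∅ ∈ {F ∈ feasibleSets M | v ∉ F})⟩)
    (bddAbove_symmDiffCards _ C) (Set.image_mono (Set.sep_subset _ _)) 2 ?_
  rintro _ ⟨F, hF, rfl⟩
  by_cases hvF : v ∈ F
  · obtain ⟨F', hF', hvF', h1, h2⟩ := exists_feasible_notMem_card_symmDiff_le hM hF hvF hC
    exact ⟨_, ⟨F', ⟨hF', hvF'⟩, rfl⟩, h1, h2⟩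
  · exact ⟨_, ⟨F, ⟨hF, hvF⟩, rfl⟩, le_rfl, Nat.le_add_right _ _⟩

end Exchange

lemma card_disjSum_symmDiff_disjSum {U V : Type*} [DecidableEq U] [DecidableEq V]
    (s t : Finset U) (B C : Finset V) : #(s.disjSum B ∆ t.disjSum C) = #(s ∆ t) + #(B ∆ C) := by
  rw [← card_disjSum]
  congr 1
  ext (a | b) <;> simp [mem_symmDiff]

section Pendant

variable (U : Type*) {R V : Type*} [DecidableEq V]

/-- `M` with a new unlooped vertex, the element of the one-point type `U`, joined to `v` only. -/
def pendant [Zero R] [One R] (M : Matrix V V R) (v : V) : Matrix (U ⊕ V) (U ⊕ V) R :=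
  fromBlocks 0 (of fun _ b => if b = v then 1 else 0) (of fun a _ => if a = v then 1 else 0) M

lemma det_psub_pendant_empty_disjSum [DecidableEq U] [CommRing R] (M : Matrix V V R) (v : V)
    (B : Finset V) : (psub (pendant U M v) ((∅ : Finset U).disjSum B)).det = (psub M B).det := by
  rw [empty_disjSum, det_psub_map]
  rfl

variable [Unique U] [Fintype V]

lemma pendant_mulVec_inl [NonAssocSemiring R] (M : Matrix V V R) (v : V) (X : U ⊕ V → R)
    (a : U) : (pendant U M v *ᵥ X) (Sum.inl a) = X (Sum.inr v) := by
  simp [pendant, mulVec, dotProduct]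

lemma pendant_mulVec_inr [NonAssocSemiring R] (M : Matrix V V R) (v : V) (X : U ⊕ V → R)
    (b : V) : (pendant U M v *ᵥ X) (Sum.inr b)
      = (if b = v then X (Sum.inl default) else 0) + (M *ᵥ (X ∘ Sum.inr)) b := by
  simp [pendant, mulVec, dotProduct]

variable [DecidableEq U] {K : Type*} [Field K]

lemma det_psub_pendant_univ_disjSum_of_notMem (M : Matrix V V K) {v : V} {B : Finset V}
    (hv : v ∉ B) : (psub (pendant U M v) ((univ : Finset U).disjSum B)).det = 0 := by
  refine (det_psub_eq_zero_iff _ _).2 ⟨Sum.elim 1 0,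
    fun h => one_ne_zero (congrFun h (Sum.inl default)), ?_, ?_⟩
  · rintro (a | b) hb
    · exact absurd (inl_mem_disjSum.2 (mem_univ a)) hb
    · rfl
  · rintro (a | b) hb
    · simp [pendant_mulVec_inl]
    · rw [pendant_mulVec_inr, if_neg fun h : b = v => hv (h ▸ inr_mem_disjSum.1 hb)]
      simp

lemma det_psub_pendant_univ_disjSum_eq_zero_iff_of_mem (M : Matrix V V K) {v : V}
    {B : Finset V} (hv : v ∈ B) :
    (psub (pendant U M v) ((univ : Finset U).disjSum B)).det = 0 ↔
      (psub M (B.erase v)).det = 0 := by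
  rw [det_psub_eq_zero_iff, det_psub_eq_zero_iff]
  constructor
  · rintro ⟨X, hX, hXS, hMX⟩
    have hXv : X (Sum.inr v) = 0 := by
      rw [← pendant_mulVec_inl U M v X default]
      exact hMX _ (inl_mem_disjSum.2 (mem_univ _))
    refine ⟨X ∘ Sum.inr, fun h => hX ?_, fun j hj => ?_, fun i hi => ?_⟩
    · have hw := hMX (Sum.inr v) (inr_mem_disjSum.2 hv)
      rw [pendant_mulVec_inr, if_pos rfl, h, mulVec_zero, Pi.zero_apply, add_zero] at hw
      ext (a | b)
      · rwa [Subsingleton.elim a default]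
      · exact congrFun h b
    · by_cases hjv : j = v
      · rwa [hjv]
      · exact hXS (Sum.inr j) fun h => hj (mem_erase.2 ⟨hjv, inr_mem_disjSum.1 h⟩)
    · have h := hMX (Sum.inr i) (inr_mem_disjSum.2 (mem_of_mem_erase hi))
      rwa [pendant_mulVec_inr, if_neg (ne_of_mem_erase hi), zero_add] at h
  · rintro ⟨x, hx, hxS, hMx⟩
    refine ⟨Sum.elim (fun _ => -(M *ᵥ x) v) x,
      fun h => hx (funext fun b => congrFun h (Sum.inr b)), ?_, ?_⟩
    · rintro (a | b) hb
      · exact absurd (inl_mem_disjSum.2 (mem_univ a)) hb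
      · exact hxS b fun h => hb (inr_mem_disjSum.2 (mem_of_mem_erase h))
    · rintro (a | b) hb
      · rw [pendant_mulVec_inl]
        exact hxS v (notMem_erase v B)
      · rw [pendant_mulVec_inr, Sum.elim_comp_inr]
        by_cases hbv : b = v
        · subst hbv
          simp
        · rw [if_neg hbv, zero_add]
          exact hMx b (mem_erase.2 ⟨hbv, inr_mem_disjSum.1 hb⟩)

lemma disjSum_mem_feasibleSets_pendant {M : Matrix V V K} {v : V} {t : Finset U}
    {B : Finset V} : t.disjSum B ∈ feasibleSets (pendant U M v) ↔
      (t = ∅ ∧ B ∈ feasibleSets M) ∨ (t = univ ∧ v ∈ B ∧ B.erase v ∈ feasibleSets M) := by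
  obtain rfl | rfl := t.eq_empty_or_nonempty.imp_right Nonempty.eq_univ
  · show _ ≠ 0 ↔ _
    rw [det_psub_pendant_empty_disjSum]
    simp [feasibleSets]
  · by_cases hv : v ∈ B
    · show ¬_ = 0 ↔ _
      rw [det_psub_pendant_univ_disjSum_eq_zero_iff_of_mem U M hv]
      simp [feasibleSets, hv]
    · show ¬_ = 0 ↔ _
      rw [det_psub_pendant_univ_disjSum_of_notMem U M hv]
      simp [hv]

lemma mem_symmDiffCards_pendant {M : Matrix V V K} {v : V} {s : Finset U} {C : Finset V}
    {k : ℕ} : k ∈ symmDiffCards (feasibleSets (pendant U M v)) (s.disjSum C) ↔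
      (∃ F ∈ feasibleSets M, #s + #(F ∆ C) = k) ∨
        ∃ F ∈ feasibleSets M, v ∉ F ∧ #sᶜ + #(insert v F ∆ C) = k := by
  have hempty : (∅ : Finset U) ∆ s = s := bot_symmDiff s
  have huniv : (univ : Finset U) ∆ s = sᶜ := by rw [← top_eq_univ, top_symmDiff, hnot_eq_compl]
  constructor
  · rintro ⟨T, hT, rfl⟩
    obtain ⟨t, B, rfl⟩ : ∃ (t : Finset U) (B : Finset V), T = t.disjSum B :=
      ⟨_, _, toLeft_disjSum_toRight.symm⟩
    rcases (disjSum_mem_feasibleSets_pendant U).1 hT with ⟨rfl, hB⟩ | ⟨rfl, hvB, hB⟩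
    · exact Or.inl ⟨B, hB, by simp only [card_disjSum_symmDiff_disjSum, hempty]⟩
    · refine Or.inr ⟨B.erase v, hB, notMem_erase v B, ?_⟩
      simp only [insert_erase hvB, card_disjSum_symmDiff_disjSum, huniv]
  · rintro (⟨F, hF, rfl⟩ | ⟨F, hF, hvF, rfl⟩)
    · exact ⟨(∅ : Finset U).disjSum F, (disjSum_mem_feasibleSets_pendant U).2 (Or.inl ⟨rfl, hF⟩),
        by simp only [card_disjSum_symmDiff_disjSum, hempty]⟩
    · refine ⟨univ.disjSum (insert v F), (disjSum_mem_feasibleSets_pendant U).2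
        (Or.inr ⟨rfl, mem_insert_self v F, by rwa [erase_insert hvF]⟩), ?_⟩
      simp only [card_disjSum_symmDiff_disjSum, huniv]

variable {M : Matrix V V K} {v : V} {C : Finset V}

lemma twistWidth_pendant_empty_disjSum_of_mem (hv : v ∈ C) :
    twistWidth (pendant U M v) ((∅ : Finset U).disjSum C) = twistWidth M C := by
  rw [twistWidth_eq_spread, twistWidth_eq_spread]
  congr 1
  ext k
  rw [mem_symmDiffCards_pendant, mem_symmDiffCards]
  simp only [card_empty, zero_add, compl_empty, card_univ, Fintype.card_unique]
  refine ⟨?_, Or.inl⟩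
  rintro (h | ⟨F, hF, hvF, rfl⟩)
  · exact h
  · refine ⟨F, hF, ?_⟩
    rw [card_symmDiff_eq_card_erase_symmDiff_erase_add (insert v F) C v,
      card_symmDiff_eq_card_erase_symmDiff_erase_add F C v, erase_insert hvF,
      erase_eq_of_notMem hvF]
    simp [hv, hvF, add_comm]

lemma twistWidth_pendant_univ_disjSum_of_notMem (hv : v ∉ C) :
    twistWidth (pendant U M v) ((univ : Finset U).disjSum C) = twistWidth M C := by
  have h : symmDiffCards (feasibleSets (pendant U M v)) ((univ : Finset U).disjSum C)
      = (· + 1) '' symmDiffCards (feasibleSets M) C := by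
    ext k
    rw [mem_symmDiffCards_pendant, symmDiffCards, Set.image_image]
    simp only [card_univ, Fintype.card_unique, compl_univ, card_empty, zero_add, Set.mem_image]
    refine ⟨?_, fun ⟨F, hF, hk⟩ => Or.inl ⟨F, hF, by omega⟩⟩
    rintro (⟨F, hF, rfl⟩ | ⟨F, hF, hvF, rfl⟩)
    · exact ⟨F, hF, add_comm _ _⟩
    · refine ⟨F, hF, ?_⟩
      rw [card_symmDiff_eq_card_erase_symmDiff_erase_add (insert v F) C v,
        card_symmDiff_eq_card_erase_symmDiff_erase_add F C v, erase_insert hvF,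
        erase_eq_of_notMem hvF]
      simp [hv, hvF]
  rw [twistWidth_eq_spread, h, spread_image_add (K := symmDiffCards (feasibleSets M) C)
    (Set.Nonempty.image _ ⟨∅, empty_mem_feasibleSets M⟩) (bddAbove_symmDiffCards _ C),
    twistWidth_eq_spread]

lemma twistWidth_pendant_empty_disjSum_of_notMem (hM : M.IsSymm) (hv : v ∉ C) :
    twistWidth (pendant U M v) ((∅ : Finset U).disjSum C)
      = twistWidth (vdel M v) (C.subtype (· ≠ v)) + 2 := by
  have hcard : ∀ F, v ∉ F → 1 + #(insert v F ∆ C) = #(F ∆ C) + 2 := fun F hvF => by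
    rw [card_symmDiff_eq_card_erase_symmDiff_erase_add (insert v F) C v,
      card_symmDiff_eq_card_erase_symmDiff_erase_add F C v, erase_insert hvF,
      erase_eq_of_notMem hvF]
    simp [hv, hvF]
    omega
  have h : symmDiffCards (feasibleSets (pendant U M v)) ((∅ : Finset U).disjSum C)
      = symmDiffCards (feasibleSets M) C ∪
          (· + 2) '' symmDiffCards {F ∈ feasibleSets M | v ∉ F} C := by
    ext k
    rw [mem_symmDiffCards_pendant, card_empty, compl_empty, card_univ, Fintype.card_unique]
    constructor
    · rintro (⟨F, hF, rfl⟩ | ⟨F, hF, hvF, rfl⟩)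
      · exact Or.inl ⟨F, hF, (zero_add _).symm⟩
      · exact Or.inr ⟨_, ⟨F, ⟨hF, hvF⟩, rfl⟩, (hcard F hvF).symm⟩
    · rintro (⟨F, hF, rfl⟩ | ⟨_, ⟨F, ⟨hF, hvF⟩, rfl⟩, rfl⟩)
      · exact Or.inl ⟨F, hF, zero_add _⟩
      · exact Or.inr ⟨F, hF, hvF, hcard F hvF⟩
  rw [twistWidth_eq_spread, h, spread_symmDiffCards_union_image_add_two hM hv,
    twistWidth_eq_spread, symmDiffCards_feasibleSets_vdel, erase_eq_of_notMem hv]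

lemma twistWidth_pendant_univ_disjSum_of_mem (hM : M.IsSymm) (hv : v ∈ C) :
    twistWidth (pendant U M v) ((univ : Finset U).disjSum C)
      = twistWidth (vdel M v) (C.subtype (· ≠ v)) + 2 := by
  have hcard : ∀ F, 1 + #(F ∆ C) = #(F ∆ C.erase v) + if v ∈ F then 0 else 2 := fun F => by
    rw [card_symmDiff_eq_card_erase_symmDiff_erase_add F C v,
      card_symmDiff_eq_card_erase_symmDiff_erase_add F (C.erase v) v, erase_idem]
    by_cases hvF : v ∈ F <;> simp [hv, hvF] <;> omega
  have hcard' : ∀ F, v ∉ F → #(insert v F ∆ C) = #(F ∆ C.erase v) := fun F hvF => by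
    rw [card_symmDiff_eq_card_erase_symmDiff_erase_add (insert v F) C v, erase_insert hvF,
      card_symmDiff_eq_card_erase_symmDiff_erase_add F (C.erase v) v, erase_idem,
      erase_eq_of_notMem hvF]
    simp [hv]
  have h : symmDiffCards (feasibleSets (pendant U M v)) ((univ : Finset U).disjSum C)
      = symmDiffCards (feasibleSets M) (C.erase v) ∪
          (· + 2) '' symmDiffCards {F ∈ feasibleSets M | v ∉ F} (C.erase v) := by
    ext k
    rw [mem_symmDiffCards_pendant, compl_univ, card_empty, card_univ, Fintype.card_unique]
    constructor
    · rintro (⟨F, hF, rfl⟩ | ⟨F, hF, hvF, rfl⟩)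
      · by_cases hvF : v ∈ F
        · exact Or.inl ⟨F, hF, by simp [hcard, hvF]⟩
        · exact Or.inr ⟨_, ⟨F, ⟨hF, hvF⟩, rfl⟩, by simp [hcard, hvF]⟩
      · exact Or.inl ⟨F, hF, by rw [zero_add, hcard' F hvF]⟩
    · rintro (⟨F, hF, rfl⟩ | ⟨_, ⟨F, ⟨hF, hvF⟩, rfl⟩, rfl⟩)
      · by_cases hvF : v ∈ F
        · exact Or.inl ⟨F, hF, by simp [hcard, hvF]⟩
        · exact Or.inr ⟨F, hF, hvF, by rw [zero_add, hcard' F hvF]⟩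
      · exact Or.inl ⟨F, hF, by simp [hcard, hvF]⟩
  rw [twistWidth_eq_spread, h, spread_symmDiffCards_union_image_add_two hM (notMem_erase v C),
    twistWidth_eq_spread, symmDiffCards_feasibleSets_vdel]

end Pendant

lemma sum_finset_sum_unique {U V M : Type*} [Unique U] [DecidableEq U] [Fintype V]
    [AddCommMonoid M] (f : Finset (U ⊕ V) → M) :
    ∑ A, f A
      = ∑ C : Finset V, (f ((∅ : Finset U).disjSum C) + f ((univ : Finset U).disjSum C)) := by
  have hU : (univ : Finset (Finset U)) = {∅, univ} := by
    ext s
    simp only [mem_univ, mem_insert, mem_singleton, true_iff]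
    exact s.eq_empty_or_nonempty.imp_right Nonempty.eq_univ
  rw [← Fintype.sum_equiv sumEquiv.symm.toEquiv (fun p => f (p.1.disjSum p.2)) f fun _ => rfl,
    Fintype.sum_prod_type, sum_comm, hU]
  exact sum_congr rfl fun C _ => sum_pair univ_nonempty.ne_empty.symm

lemma sum_finset_subtype_ne {V M : Type*} [Fintype V] [DecidableEq V] [AddCommMonoid M] (v : V)
    (g : Finset {u // u ≠ v} → M) :
    ∑ C : Finset V, g (C.subtype (· ≠ v)) = 2 • ∑ C, g C := by
  have hinsert : ∀ t : Finset V, (insert v t).subtype (· ≠ v) = t.subtype (· ≠ v) := fun t => by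
    ext ⟨u, hu⟩
    simp [hu]
  have hbij : ∑ t ∈ (univ.erase v).powerset, g (t.subtype (· ≠ v)) = ∑ C, g C := by
    refine sum_nbij' (Finset.subtype (· ≠ v)) (map (Function.Embedding.subtype _))
      (fun _ _ => mem_univ _) (fun C _ => ?_) (fun t ht => ?_) (fun C _ => ?_) (fun _ _ => rfl)
    · refine mem_powerset.2 fun u hu => ?_
      obtain ⟨w, -, rfl⟩ := mem_map.1 hu
      exact mem_erase.2 ⟨w.2, mem_univ _⟩
    · exact subtype_map_of_mem fun u hu => ne_of_mem_erase (mem_powerset.1 ht hu)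
    · ext ⟨u, hu⟩
      simp [hu]
  rw [← powerset_univ, ← insert_erase (mem_univ v), sum_powerset_insert (notMem_erase v univ)]
  simp only [hinsert, hbij, two_nsmul]

theorem twistPoly_pendant (U : Type*) [Unique U] [DecidableEq U] {K V : Type*} [Field K]
    [Fintype V] [DecidableEq V] {M : Matrix V V K} (hM : M.IsSymm) (v : V) :
    twistPoly (pendant U M v) = twistPoly M + 2 * X ^ 2 * twistPoly (vdel M v) := by
  have hpair : ∀ C : Finset V,
      (X : ℤ[X]) ^ twistWidth (pendant U M v) ((∅ : Finset U).disjSum C)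
        + X ^ twistWidth (pendant U M v) ((univ : Finset U).disjSum C)
      = X ^ twistWidth M C + X ^ 2 * X ^ twistWidth (vdel M v) (C.subtype (· ≠ v)) := by
    intro C
    by_cases hv : v ∈ C
    · rw [twistWidth_pendant_empty_disjSum_of_mem U hv,
        twistWidth_pendant_univ_disjSum_of_mem U hM hv, pow_add]
      ring
    · rw [twistWidth_pendant_empty_disjSum_of_notMem U hM hv,
        twistWidth_pendant_univ_disjSum_of_notMem U hv, pow_add]
      ring
  rw [twistPoly, sum_finset_sum_unique, sum_congr rfl fun C _ => hpair C, sum_add_distrib,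
    ← mul_sum, sum_finset_subtype_ne v (fun C => (X : ℤ[X]) ^ twistWidth (vdel M v) C),
    twistPoly, twistPoly, nsmul_eq_mul]
  push_cast
  ring

lemma onePointJoin_leaf_eq_pendant {V : Type*} [DecidableEq V] (M : Matrix V V (ZMod 2)) (v : V)
    (m : ZMod 2) :
    onePointJoin !![0, 1; 1, m] (1 : Fin 2) M v = pendant {u : Fin 2 // u ≠ 1} M v := by
  have h0 : ∀ a : {u : Fin 2 // u ≠ 1}, a.1 = 0 := by decide
  ext (a | a) (b | b) <;> simp [onePointJoin, pendant, h0]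

instance : Unique {u : Fin 2 // u ≠ 1} where
  default := ⟨0, by decide⟩
  uniq := by decide

/-- Proposition 4.2(a): if `G1` consists of two vertices `w` (unlooped) and `v1` joined by
an edge (`v1` having the same loop status as `v2`), then
`T_{(G1,v1)∨(G2,v2)} = T_{G2} + 2z²·T_{G2−v2}`.  Here `G1` has adjacency matrix
`!![0, 1; 1, M2 v2 v2]` with `w` the vertex `0` and `v1` the vertex `1`. -/
theorem twistPoly_join_unlooped_leaf
    {V2 : Type*} [Fintype V2] [DecidableEq V2]
    (M2 : Matrix V2 V2 (ZMod 2)) (hM2 : M2.IsSymm) (v2 : V2) :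
    twistPoly (onePointJoin !![0, 1; 1, M2 v2 v2] (1 : Fin 2) M2 v2)
      = twistPoly M2 + 2 * X ^ 2 * twistPoly (vdel M2 v2) := by
  rw [onePointJoin_leaf_eq_pendant]
  exact twistPoly_pendant _ hM2 v2
end

section
/- Let G1 be the looped simple graph with exactly two vertices w and v1 connected by an edge, where w is looped. Let G2 be any looped simple graph with a vertex v2 having the same loop status as v1. Then T_{(G1,v1)∨(G2,v2)}(z) = z·T_{G2}(z) + z·T_{G2+v2}(z). -/
open Matrix Polynomial

/-!
A feasible set of the join either avoids the leaf `w`, and is then feasible in `G2`, or contains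
it; as `w` is looped and adjacent only to `v`, a Schur complement on `w` makes the latter exactly
the feasible sets of `G2 + v` (with `w` added). So, twisting by `s ⊔ t` with `s ⊆ {w}`, the
feasible sizes of the join are those of `D(G2) * t` shifted by `|s|` together with those of
`D(G2 + v) * t` shifted by `1 - |s|`. Loop complementation at `v` moves a feasible set at most
by removing `v`, so the size ranges of `D(G2) * t` and `D(G2 + v) * t` share one endpoint and
their other endpoints differ by at most one. Then the widths of the join twisted by `∅ ⊔ t` and
`{w} ⊔ t` are, in some order, the widths of `D(G2) * t` and `D(G2 + v) * t` plus one.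
-/

open scoped symmDiff

namespace Finset

variable {α β : Type*}

theorem eq_empty_or_eq_univ [Fintype α] [Subsingleton α] (s : Finset α) : s = ∅ ∨ s = univ :=
  s.eq_empty_or_nonempty.imp_right Nonempty.eq_univ

variable [DecidableEq α] [DecidableEq β]

theorem empty_symmDiff (s : Finset α) : ∅ ∆ s = s :=
  bot_symmDiff s

theorem univ_symmDiff [Fintype α] (s : Finset α) : univ ∆ s = sᶜ :=
  top_symmDiff s

theorem disjSum_symmDiff_disjSum (s s' : Finset α) (t t' : Finset β) :
    s.disjSum t ∆ s'.disjSum t' = (s ∆ s').disjSum (t ∆ t') := by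
  ext (a | b) <;> simp [mem_symmDiff]

theorem erase_symmDiff_of_mem {v : α} {t : Finset α} (hv : v ∈ t) (F : Finset α) :
    F.erase v ∆ t = insert v (F ∆ t) := by
  ext x
  by_cases hx : x = v <;> simp [mem_symmDiff, hx, hv]

theorem erase_symmDiff_of_notMem {v : α} {t : Finset α} (hv : v ∉ t) (F : Finset α) :
    F.erase v ∆ t = (F ∆ t).erase v := by
  ext x
  by_cases hx : x = v <;> simp [mem_symmDiff, hx, hv]

theorem sum_finset_eq_empty_add_univ {M : Type*} [AddCommMonoid M] [Fintype α] [Unique α]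
    (f : Finset α → M) : ∑ s, f s = f ∅ + f univ := by
  have huniv : (univ : Finset (Finset α)) = {∅, univ} := by
    ext s
    simpa using s.eq_empty_or_eq_univ
  rw [huniv, sum_pair (univ_nonempty.ne_empty.symm)]

def disjSumSubtypeEquiv (s : Finset α) (t : Finset β) : ↥(s.disjSum t) ≃ ↥s ⊕ ↥t :=
  Equiv.subtypeSum.trans
    (Equiv.sumCongr (Equiv.subtypeEquivRight fun _ => inl_mem_disjSum)
      (Equiv.subtypeEquivRight fun _ => inr_mem_disjSum))

end Finset

namespace Matrix

theorem det_fromBlocks_unit_add {R n : Type*} [CommRing R] [Fintype n] [DecidableEq n]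
    (A : Matrix n n R) (B : Matrix n Unit R) (C : Matrix Unit n R) (d c : R) :
    (fromBlocks A B C (of fun _ _ => d + c)).det
      = (fromBlocks A B C (of fun _ _ => d)).det + c * A.det := by
  set M := fromBlocks A B C (of fun _ _ => d)
  have hrow : fromBlocks A B C (of fun _ _ => d + c)
      = M.updateRow (Sum.inr .unit) (M (Sum.inr .unit) + c • Pi.single (Sum.inr .unit) 1) := by
    ext (i | i) (j | j) <;> simp [M, updateRow_apply]
  have hunit : M.updateRow (Sum.inr .unit) (Pi.single (Sum.inr .unit) 1) = fromBlocks A B 0 1 := by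
    ext (i | i) (j | j) <;> simp [M, updateRow_apply]
  rw [hrow, det_updateRow_add, det_updateRow_smul, updateRow_eq_self, hunit,
    det_fromBlocks_zero₂₁, det_one, mul_one]

end Matrix

section PrincipalSubmatrix

variable {R V : Type*} [DecidableEq V]

theorem det_psub_empty [CommRing R] (N : Matrix V V R) : (psub N ∅).det = 1 :=
  Matrix.det_isEmpty

theorem det_psub_insert [CommRing R] {x : V} {T : Finset V} (hx : x ∉ T) (N : Matrix V V R) :
    (psub N (insert x T)).det
      = (Matrix.fromBlocks (psub N T) (Matrix.of fun i _ => N i x) (Matrix.of fun _ j => N x j)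
          (Matrix.of fun (_ _ : Unit) => N x x)).det := by
  rw [← Matrix.det_submatrix_equiv_self
    ((Finset.subtypeInsertEquivOption hx).trans (Equiv.optionEquivSumPUnit.{0} ↥T)).symm]
  congr 1
  ext (i | i) (j | j) <;> rfl

theorem lcomp_lcomp (N : Matrix V V (ZMod 2)) (v : V) : lcomp (lcomp N v) v = N := by
  rw [lcomp, lcomp, add_assoc, ← Matrix.single_add, CharTwo.add_self_eq_zero, Matrix.single_zero,
    add_zero]

theorem lcomp_apply_of_ne_left (N : Matrix V V (ZMod 2)) {v i : V} (hi : i ≠ v) (j : V) :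
    lcomp N v i j = N i j := by
  simp [lcomp, Matrix.single, hi.symm]

theorem lcomp_apply_of_ne_right (N : Matrix V V (ZMod 2)) {v j : V} (i : V) (hj : j ≠ v) :
    lcomp N v i j = N i j := by
  simp [lcomp, Matrix.single, hj.symm]

theorem psub_lcomp_of_notMem (N : Matrix V V (ZMod 2)) {v : V} {T : Finset V} (hv : v ∉ T) :
    psub (lcomp N v) T = psub N T := by
  ext i j
  exact lcomp_apply_of_ne_left N (ne_of_mem_of_not_mem i.2 hv) j

theorem det_psub_lcomp_insert (N : Matrix V V (ZMod 2)) {v : V} {T : Finset V} (hv : v ∉ T) :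
    (psub (lcomp N v) (insert v T)).det = (psub N (insert v T)).det + (psub N T).det := by
  rw [det_psub_insert hv, det_psub_insert hv, psub_lcomp_of_notMem N hv, ← one_mul (psub N T).det,
    ← Matrix.det_fromBlocks_unit_add]
  congr 2
  · ext i u
    exact lcomp_apply_of_ne_left N (ne_of_mem_of_not_mem i.2 hv) v
  · ext u j
    exact lcomp_apply_of_ne_right N v (ne_of_mem_of_not_mem j.2 hv)
  · ext u u'
    simp [lcomp]

theorem exists_det_psub_lcomp_ne_zero (N : Matrix V V (ZMod 2)) (v : V) {F : Finset V}
    (hF : (psub N F).det ≠ 0) :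
    ∃ F', (psub (lcomp N v) F').det ≠ 0 ∧ (F' = F ∨ F' = F.erase v) := by
  by_cases hvF : v ∈ F
  · by_cases hdet : (psub (lcomp N v) F).det = 0
    · refine ⟨F.erase v, ?_, Or.inr rfl⟩
      have hsum := det_psub_lcomp_insert N (F.notMem_erase v)
      rw [Finset.insert_erase hvF, hdet] at hsum
      rw [psub_lcomp_of_notMem N (F.notMem_erase v)]
      intro herase
      rw [herase, add_zero] at hsum
      exact hF hsum.symm
    · exact ⟨F, hdet, Or.inl rfl⟩
  · exact ⟨F, by rwa [psub_lcomp_of_notMem N hvF], Or.inl rfl⟩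

end PrincipalSubmatrix

section TwistSizes

variable {V : Type*} [DecidableEq V]

/-- The sizes of the feasible sets `F ∆ A` of the twist `D(N) * A`. -/
def twistSizes (N : Matrix V V (ZMod 2)) (A : Finset V) : Set ℕ :=
  {k | ∃ F, (psub N F).det ≠ 0 ∧ (F ∆ A).card = k}

theorem twistWidth_eq_sub {N : Matrix V V (ZMod 2)} {A : Finset V} {a b : ℕ}
    (ha : IsLeast (twistSizes N A) a) (hb : IsGreatest (twistSizes N A) b) :
    twistWidth N A = b - a := by
  have hsizes : {k | ∃ S, (psub N (S ∆ A)).det ≠ 0 ∧ S.card = k} = twistSizes N A := by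
    ext k
    constructor
    · rintro ⟨S, hS, rfl⟩
      exact ⟨S ∆ A, hS, by rw [symmDiff_symmDiff_cancel_right]⟩
    · rintro ⟨F, hF, rfl⟩
      exact ⟨F ∆ A, by rwa [symmDiff_symmDiff_cancel_right], rfl⟩
  rw [twistWidth, sysWidth, hsizes, ha.csInf_eq, hb.csSup_eq]

theorem exists_isLeast_isGreatest_twistSizes [Fintype V] (N : Matrix V V (ZMod 2)) (A : Finset V) :
    ∃ a b, IsLeast (twistSizes N A) a ∧ IsGreatest (twistSizes N A) b := by
  have hne : (twistSizes N A).Nonempty := ⟨_, ∅, by simp [det_psub_empty], rfl⟩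
  have hbdd : BddAbove (twistSizes N A) := ⟨Fintype.card V, by
    rintro k ⟨F, -, rfl⟩
    exact Finset.card_le_univ _⟩
  obtain ⟨a, ha⟩ := (OrderBot.bddBelow _).exists_isLeast_of_nonempty hne
  obtain ⟨b, hb⟩ := hbdd.exists_isGreatest_of_nonempty hne
  exact ⟨a, b, ha, hb⟩

theorem le_of_forall_exists_near {K K' : Set ℕ} {i j a b c d : ℕ}
    (h : ∀ k ∈ K, ∃ k' ∈ K', k ≤ k' + i ∧ k' ≤ k + j) (ha : IsLeast K a) (hb : IsGreatest K b)
    (hc : IsLeast K' c) (hd : IsGreatest K' d) : b ≤ d + i ∧ c ≤ a + j := by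
  obtain ⟨k, hk, hbk, -⟩ := h b hb.1
  obtain ⟨k', hk', -, hk'a⟩ := h a ha.1
  exact ⟨hbk.trans (by grw [hd.2 hk]), (hc.2 hk').trans hk'a⟩

theorem forall_exists_twistSizes_lcomp_of_mem (N : Matrix V V (ZMod 2)) {v : V} {t : Finset V}
    (hv : v ∈ t) :
    ∀ k ∈ twistSizes N t, ∃ k' ∈ twistSizes (lcomp N v) t, k ≤ k' ∧ k' ≤ k + 1 := by
  rintro k ⟨F, hF, rfl⟩
  obtain ⟨F', hF', rfl | rfl⟩ := exists_det_psub_lcomp_ne_zero N v hF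
  · exact ⟨_, ⟨F', hF', rfl⟩, by omega⟩
  · refine ⟨_, ⟨_, hF', rfl⟩, ?_⟩
    rw [Finset.erase_symmDiff_of_mem hv]
    exact ⟨Finset.card_le_card (Finset.subset_insert _ _), Finset.card_insert_le _ _⟩

theorem forall_exists_twistSizes_lcomp_of_notMem (N : Matrix V V (ZMod 2)) {v : V} {t : Finset V}
    (hv : v ∉ t) :
    ∀ k ∈ twistSizes N t, ∃ k' ∈ twistSizes (lcomp N v) t, k ≤ k' + 1 ∧ k' ≤ k := by
  rintro k ⟨F, hF, rfl⟩
  obtain ⟨F', hF', rfl | rfl⟩ := exists_det_psub_lcomp_ne_zero N v hF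
  · exact ⟨_, ⟨F', hF', rfl⟩, by omega⟩
  · refine ⟨_, ⟨_, hF', rfl⟩, ?_⟩
    rw [Finset.erase_symmDiff_of_notMem hv]
    have := Finset.pred_card_le_card_erase (s := F ∆ t) (a := v)
    exact ⟨by omega, Finset.card_erase_le⟩

theorem twistSizes_lcomp_endpoints (N : Matrix V V (ZMod 2)) (v : V) (t : Finset V)
    {a b c d : ℕ} (ha : IsLeast (twistSizes N t) a) (hb : IsGreatest (twistSizes N t) b)
    (hc : IsLeast (twistSizes (lcomp N v) t) c) (hd : IsGreatest (twistSizes (lcomp N v) t) d) :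
    (b = d ∧ a ≤ c + 1 ∧ c ≤ a + 1) ∨ (a = c ∧ b ≤ d + 1 ∧ d ≤ b + 1) := by
  have hc' : IsLeast (twistSizes (lcomp (lcomp N v) v) t) a := by rwa [lcomp_lcomp]
  have hd' : IsGreatest (twistSizes (lcomp (lcomp N v) v) t) b := by rwa [lcomp_lcomp]
  by_cases hv : v ∈ t
  · have h₁ := le_of_forall_exists_near (i := 0)
      (by simpa using forall_exists_twistSizes_lcomp_of_mem N hv) ha hb hc hd
    have h₂ := le_of_forall_exists_near (i := 0)
      (by simpa using forall_exists_twistSizes_lcomp_of_mem (lcomp N v) hv) hc hd hc' hd'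
    omega
  · have h₁ := le_of_forall_exists_near (j := 0)
      (by simpa using forall_exists_twistSizes_lcomp_of_notMem N hv) ha hb hc hd
    have h₂ := le_of_forall_exists_near (j := 0)
      (by simpa using forall_exists_twistSizes_lcomp_of_notMem (lcomp N v) hv) hc hd hc' hd'
    omega

end TwistSizes

/-- The arguments on the left are the widths of `[a, b] ∪ [c + 1, d + 1]` and
`[a + 1, b + 1] ∪ [c, d]`. -/
theorem apply_width_add_apply_width {M : Type*} [AddCommMagma M] (f : ℕ → M) {a b c d : ℕ}
    (hab : a ≤ b) (hcd : c ≤ d)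
    (h : (b = d ∧ a ≤ c + 1 ∧ c ≤ a + 1) ∨ (a = c ∧ b ≤ d + 1 ∧ d ≤ b + 1)) :
    f (max b (d + 1) - min a (c + 1)) + f (max (b + 1) d - min (a + 1) c)
      = f (b - a + 1) + f (d - c + 1) := by
  obtain ⟨h₁, h₂⟩ | ⟨h₁, h₂⟩ :
      (max b (d + 1) - min a (c + 1) = b - a + 1 ∧ max (b + 1) d - min (a + 1) c = d - c + 1) ∨
      (max b (d + 1) - min a (c + 1) = d - c + 1 ∧ max (b + 1) d - min (a + 1) c = b - a + 1) := by
    omega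
  · rw [h₁, h₂]
  · rw [h₁, h₂, add_comm]

section OnePointJoin

variable {V1 V2 : Type*} [DecidableEq V1] [DecidableEq V2]

theorem det_psub_onePointJoin_disjSum (M1 : Matrix V1 V1 (ZMod 2)) (v1 : V1)
    (M2 : Matrix V2 V2 (ZMod 2)) (v2 : V2) (s : Finset {u : V1 // u ≠ v1}) (t : Finset V2) :
    (psub (onePointJoin M1 v1 M2 v2) (s.disjSum t)).det
      = (Matrix.fromBlocks (psub (vdel M1 v1) s)
          (Matrix.of fun a b => if b.1 = v2 then M1 a.1.1 v1 else 0)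
          (Matrix.of fun a b => if a.1 = v2 then M1 v1 b.1.1 else 0) (psub M2 t)).det := by
  rw [← Matrix.det_submatrix_equiv_self (Finset.disjSumSubtypeEquiv s t).symm]
  congr 1
  ext (i | i) (j | j) <;> rfl

theorem det_psub_onePointJoin_empty_disjSum (M1 : Matrix V1 V1 (ZMod 2)) (v1 : V1)
    (M2 : Matrix V2 V2 (ZMod 2)) (v2 : V2) (t : Finset V2) :
    (psub (onePointJoin M1 v1 M2 v2) ((∅ : Finset {u : V1 // u ≠ v1}).disjSum t)).det
      = (psub M2 t).det := by
  rw [det_psub_onePointJoin_disjSum, Subsingleton.elim (psub (vdel M1 v1) ∅) 1,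
    Matrix.det_fromBlocks_one₁₁]
  congr 1
  ext i j
  simp [Matrix.mul_apply]

end OnePointJoin

instance inst_s5 : Unique {u : Fin 2 // u ≠ 1} where
  default := ⟨0, by decide⟩
  uniq u := Subtype.ext (by have := u.2; show u.1 = 0; omega)

theorem val_eq_zero_of_ne_one (u : {u : Fin 2 // u ≠ 1}) : u.1 = 0 :=
  congrArg Subtype.val (Unique.eq_default u)

theorem det_psub_leafJoin_univ_disjSum {V2 : Type*} [DecidableEq V2] (x : ZMod 2)
    (M2 : Matrix V2 V2 (ZMod 2)) (v2 : V2) (t : Finset V2) :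
    (psub (onePointJoin !![1, 1; 1, x] 1 M2 v2)
        ((Finset.univ : Finset {u : Fin 2 // u ≠ 1}).disjSum t)).det
      = (psub (lcomp M2 v2) t).det := by
  have hA : psub (vdel !![1, 1; 1, x] 1) Finset.univ = 1 := by
    ext i j
    rw [Subsingleton.elim i j]
    simp [psub, vdel, val_eq_zero_of_ne_one]
  rw [det_psub_onePointJoin_disjSum, hA, Matrix.det_fromBlocks_one₁₁]
  congr 1
  ext i j
  simp [Matrix.mul_apply, psub, lcomp, Matrix.single, val_eq_zero_of_ne_one, CharTwo.sub_eq_add,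
    eq_comm, ite_and]
  split_ifs <;> rfl

theorem mem_twistSizes_disjSum_iff {α β : Type*} [DecidableEq α] [DecidableEq β]
    (N : Matrix (α ⊕ β) (α ⊕ β) (ZMod 2)) (s : Finset α) (t : Finset β) (k : ℕ) :
    k ∈ twistSizes N (s.disjSum t)
      ↔ ∃ (s' : Finset α) (t' : Finset β),
          (psub N (s'.disjSum t')).det ≠ 0 ∧ (s' ∆ s).card + (t' ∆ t).card = k := by
  constructor
  · rintro ⟨F, hF, rfl⟩
    obtain ⟨s', t', rfl⟩ : ∃ (s' : Finset α) (t' : Finset β), F = s'.disjSum t' :=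
      ⟨_, _, F.toLeft_disjSum_toRight.symm⟩
    exact ⟨s', t', hF, by rw [Finset.disjSum_symmDiff_disjSum, Finset.card_disjSum]⟩
  · rintro ⟨s', t', hF, rfl⟩
    exact ⟨_, hF, by rw [Finset.disjSum_symmDiff_disjSum, Finset.card_disjSum]⟩

section LeafJoin

variable {V2 : Type*} [DecidableEq V2] (x : ZMod 2) (M2 : Matrix V2 V2 (ZMod 2)) (v2 : V2)

theorem twistSizes_leafJoin_disjSum (s : Finset {u : Fin 2 // u ≠ 1}) (t : Finset V2) :
    twistSizes (onePointJoin !![1, 1; 1, x] 1 M2 v2) (s.disjSum t)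
      = (· + s.card) '' twistSizes M2 t ∪ (· + sᶜ.card) '' twistSizes (lcomp M2 v2) t := by
  ext k
  rw [mem_twistSizes_disjSum_iff]
  constructor
  · rintro ⟨s', t', hdet, rfl⟩
    rcases s'.eq_empty_or_eq_univ with rfl | rfl
    · rw [det_psub_onePointJoin_empty_disjSum] at hdet
      exact Or.inl ⟨_, ⟨t', hdet, rfl⟩, by rw [Finset.empty_symmDiff, add_comm]⟩
    · rw [det_psub_leafJoin_univ_disjSum] at hdet
      exact Or.inr ⟨_, ⟨t', hdet, rfl⟩, by rw [Finset.univ_symmDiff, add_comm]⟩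
  · rintro (⟨_, ⟨t', hdet, rfl⟩, rfl⟩ | ⟨_, ⟨t', hdet, rfl⟩, rfl⟩)
    · exact ⟨∅, t', by rwa [det_psub_onePointJoin_empty_disjSum],
        by rw [Finset.empty_symmDiff, add_comm]⟩
    · exact ⟨Finset.univ, t', by rwa [det_psub_leafJoin_univ_disjSum],
        by rw [Finset.univ_symmDiff, add_comm]⟩

theorem twistWidth_leafJoin_disjSum (s : Finset {u : Fin 2 // u ≠ 1}) (t : Finset V2)
    {a b c d : ℕ} (ha : IsLeast (twistSizes M2 t) a) (hb : IsGreatest (twistSizes M2 t) b)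
    (hc : IsLeast (twistSizes (lcomp M2 v2) t) c)
    (hd : IsGreatest (twistSizes (lcomp M2 v2) t) d) :
    twistWidth (onePointJoin !![1, 1; 1, x] 1 M2 v2) (s.disjSum t)
      = max (b + s.card) (d + sᶜ.card) - min (a + s.card) (c + sᶜ.card) := by
  have hmono : ∀ n : ℕ, Monotone (· + n) := fun n _ _ h => Nat.add_le_add_right h n
  refine twistWidth_eq_sub ?_ ?_ <;> rw [twistSizes_leafJoin_disjSum]
  · exact ((hmono _).map_isLeast ha).union ((hmono _).map_isLeast hc)
  · exact ((hmono _).map_isGreatest hb).union ((hmono _).map_isGreatest hd)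

theorem X_pow_twistWidth_leafJoin_add [Fintype V2] (t : Finset V2) :
    (X : ℤ[X]) ^ twistWidth (onePointJoin !![1, 1; 1, x] 1 M2 v2) ((∅ : Finset _).disjSum t)
        + X ^ twistWidth (onePointJoin !![1, 1; 1, x] 1 M2 v2) (Finset.univ.disjSum t)
      = X * X ^ twistWidth M2 t + X * X ^ twistWidth (lcomp M2 v2) t := by
  obtain ⟨a, b, ha, hb⟩ := exists_isLeast_isGreatest_twistSizes M2 t
  obtain ⟨c, d, hc, hd⟩ := exists_isLeast_isGreatest_twistSizes (lcomp M2 v2) t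
  rw [twistWidth_leafJoin_disjSum x M2 v2 _ t ha hb hc hd,
    twistWidth_leafJoin_disjSum x M2 v2 _ t ha hb hc hd, twistWidth_eq_sub ha hb,
    twistWidth_eq_sub hc hd, ← pow_succ', ← pow_succ']
  simp only [Finset.card_empty, Finset.compl_empty, Finset.card_univ, Finset.compl_univ,
    Fintype.card_unique, add_zero]
  exact apply_width_add_apply_width _ (ha.2 hb.1) (hc.2 hd.1)
    (twistSizes_lcomp_endpoints M2 v2 t ha hb hc hd)

end LeafJoin

/-- Here `G1` has adjacency matrix `!![1, 1; 1, M2 v2 v2]`, with `w` the vertex `0` and `v1`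
the vertex `1`. -/
theorem twistPoly_join_looped_leaf_general
    {V2 : Type*} [Fintype V2] [DecidableEq V2]
    (M2 : Matrix V2 V2 (ZMod 2)) (v2 : V2) :
    twistPoly (onePointJoin !![1, 1; 1, M2 v2 v2] (1 : Fin 2) M2 v2)
      = X * twistPoly M2 + X * twistPoly (lcomp M2 v2) := by
  rw [twistPoly, ← Finset.sumEquiv.symm.toEquiv.sum_comp, Fintype.sum_prod_type_right,
    twistPoly, twistPoly, Finset.mul_sum, Finset.mul_sum, ← Finset.sum_add_distrib]
  refine Finset.sum_congr rfl fun t _ => ?_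
  rw [Finset.sum_finset_eq_empty_add_univ]
  exact X_pow_twistWidth_leafJoin_add _ M2 v2 t

/-- Proposition 4.2(b): if `G1` consists of two vertices `w` (looped) and `v1` joined by
an edge (`v1` having the same loop status as `v2`), then
`T_{(G1,v1)∨(G2,v2)} = z·T_{G2} + z·T_{G2+v2}`.  Here `G1` has adjacency matrix
`!![1, 1; 1, M2 v2 v2]` with `w` the vertex `0` and `v1` the vertex `1`. -/
theorem twistPoly_join_looped_leaf
    {V2 : Type*} [Fintype V2] [DecidableEq V2]
    (M2 : Matrix V2 V2 (ZMod 2)) (hM2 : M2.IsSymm) (v2 : V2) :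
    twistPoly (onePointJoin !![1, 1; 1, M2 v2 v2] (1 : Fin 2) M2 v2)
      = X * twistPoly M2 + X * twistPoly (lcomp M2 v2) :=
  twistPoly_join_looped_leaf_general M2 v2
end

section
/- Let n ≥ 3 be an odd integer and m ≥ 1 an integer. Then the twist polynomial of the windmill graph K_n^{(m)} satisfies T_{K_n^{(m)}}(z) = 2^{m(n−2)+1} · z^{m(n−3)+2} · ((z²+1)^m − z^{2m} + z^{2m−2}) in ℤ[z]. -/
open Matrix Polynomial

/-- The adjacency matrix of the windmill graph `K_n^{(m)}`, obtained from `m` disjoint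
copies of the unlooped complete graph `K_n` by identifying one chosen vertex from each
copy into a single common hub vertex (`Sum.inr ()`).  Vertex `Sum.inl (i, a)` is the
`a`-th non-hub vertex of the `i`-th copy. -/
def windmill (n m : ℕ) :
    Matrix ((Fin m × Fin (n - 1)) ⊕ Unit) ((Fin m × Fin (n - 1)) ⊕ Unit) (ZMod 2) :=
  Matrix.of fun i j =>
    match i, j with
    | Sum.inl a, Sum.inl b => if a.1 = b.1 ∧ a ≠ b then 1 else 0
    | Sum.inl _, Sum.inr _ => 1
    | Sum.inr _, Sum.inl _ => 1
    | Sum.inr _, Sum.inr _ => 0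

namespace WindmillAux

variable {n m : ℕ}

def wmk (n : ℕ) {m : ℕ} (h : Bool) (f : Fin m → Finset (Fin (n - 1))) :
    Finset ((Fin m × Fin (n - 1)) ⊕ Unit) :=
  ((Finset.univ.filter fun p : Fin m × Fin (n - 1) => p.2 ∈ f p.1).map
      ⟨Sum.inl, Sum.inl_injective⟩) ∪ (if h then {Sum.inr ()} else ∅)

@[simp] lemma mem_wmk_inl {h : Bool} {f : Fin m → Finset (Fin (n - 1))}
    {i : Fin m} {a : Fin (n - 1)} :
    (Sum.inl (i, a) : (Fin m × Fin (n - 1)) ⊕ Unit) ∈ wmk n h f ↔ a ∈ f i := by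
  cases h <;> simp [wmk]

@[simp] lemma mem_wmk_inr {h : Bool} {f : Fin m → Finset (Fin (n - 1))} {u : Unit} :
    (Sum.inr u : (Fin m × Fin (n - 1)) ⊕ Unit) ∈ wmk n h f ↔ h = true := by
  cases h <;> simp [wmk]

def bladeSet (T : Finset ((Fin m × Fin (n - 1)) ⊕ Unit)) (i : Fin m) :
    Finset (Fin (n - 1)) :=
  Finset.univ.filter fun a => Sum.inl (i, a) ∈ T

lemma wmk_spec (T : Finset ((Fin m × Fin (n - 1)) ⊕ Unit)) :
    wmk n (decide ((Sum.inr () : (Fin m × Fin (n - 1)) ⊕ Unit) ∈ T)) (bladeSet T) = T := by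
  ext x
  rcases x with ⟨i, a⟩ | u
  · simp [bladeSet]
  · cases u; simp

lemma card_wmk (h : Bool) (f : Fin m → Finset (Fin (n - 1))) :
    (wmk n h f).card = (∑ i, (f i).card) + (if h then 1 else 0) := by
  rw [wmk, Finset.card_union_of_disjoint, Finset.card_map]
  · congr 1
    · rw [Finset.card_filter, Fintype.sum_prod_type]
      refine Finset.sum_congr rfl fun i _ => ?_
      rw [← Finset.card_filter]
      congr 1
      simp
    · cases h <;> simp
  · cases h <;> simp

lemma symmDiff_wmk (h h' : Bool) (f f' : Fin m → Finset (Fin (n - 1))) :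
    symmDiff (wmk n h f) (wmk n h' f') = wmk n (xor h h') (fun i => symmDiff (f i) (f' i)) := by
  ext x
  rcases x with ⟨i, a⟩ | u
  · simp [Finset.mem_symmDiff]
  · cases u
    simp only [Finset.mem_symmDiff, mem_wmk_inr]
    cases h <;> cases h' <;> simp


lemma zmod2_add_self (x : ZMod 2) : x + x = 0 := by revert x; decide

lemma rowsum_inl (u : (Fin m × Fin (n - 1)) ⊕ Unit → ZMod 2) (i : Fin m) (a : Fin (n - 1)) :
    ∑ y, windmill n m (Sum.inl (i, a)) y * u y
      = (∑ b, u (Sum.inl (i, b))) + u (Sum.inl (i, a)) + u (Sum.inr ()) := by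
  rw [Fintype.sum_sum_type]
  have h2 : ∑ y : Unit, windmill n m (Sum.inl (i, a)) (Sum.inr y) * u (Sum.inr y)
      = u (Sum.inr ()) := by
    simp [windmill]
  rw [h2, Fintype.sum_prod_type]
  congr 1
  rw [Finset.sum_eq_single i]
  · have key : ∀ b : Fin (n - 1),
        windmill n m (Sum.inl (i, a)) (Sum.inl (i, b)) * u (Sum.inl (i, b))
          = u (Sum.inl (i, b)) + (if a = b then u (Sum.inl (i, b)) else 0) := by
      intro b
      by_cases hab : a = b
      · subst hab
        simp [windmill, zmod2_add_self]
      · have : windmill n m (Sum.inl (i, a)) (Sum.inl (i, b)) = 1 := by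
          simp [windmill, Ne, Prod.ext_iff]
          tauto
        simp [this, hab]
    rw [Finset.sum_congr rfl fun b _ => key b, Finset.sum_add_distrib, Finset.sum_ite_eq]
    simp
  · intro j _ hji
    apply Finset.sum_eq_zero
    intro b _
    have : windmill n m (Sum.inl (i, a)) (Sum.inl (j, b)) = 0 := by
      simp [windmill]
      intro hij
      exact absurd hij.symm hji
    rw [this, zero_mul]
  · simp

lemma rowsum_inr (u : (Fin m × Fin (n - 1)) ⊕ Unit → ZMod 2) :
    ∑ y, windmill n m (Sum.inr ()) y * u y
      = ∑ j, ∑ b, u (Sum.inl (j, b)) := by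
  rw [Fintype.sum_sum_type, Fintype.sum_prod_type]
  have h2 : ∑ y : Unit, windmill n m (Sum.inr ()) (Sum.inr y) * u (Sum.inr y) = 0 := by
    simp [windmill]
  rw [h2, add_zero]
  refine Finset.sum_congr rfl fun j _ => Finset.sum_congr rfl fun b _ => ?_
  simp [windmill]

lemma mulVec_psub {T : Finset ((Fin m × Fin (n - 1)) ⊕ Unit)} (v : ↥T → ZMod 2)
    (x : (Fin m × Fin (n - 1)) ⊕ Unit) (hx : x ∈ T) :
    (psub (windmill n m) T *ᵥ v) ⟨x, hx⟩
      = ∑ y, windmill n m x y * (if hy : y ∈ T then v ⟨y, hy⟩ else 0) := by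
  rw [Matrix.mulVec]
  simp only [dotProduct, psub, Matrix.submatrix_apply]
  rw [Finset.univ_eq_attach]
  have hvan : ∀ y ∈ Finset.univ, y ∉ T →
      windmill n m x y * (if hy : y ∈ T then v ⟨y, hy⟩ else 0) = 0 := by
    intro y _ hy
    rw [dif_neg hy, mul_zero]
  rw [← Finset.sum_subset (Finset.subset_univ T) hvan]
  rw [← Finset.sum_attach T (fun y => windmill n m x y * (if hy : y ∈ T then v ⟨y, hy⟩ else 0))]
  refine Finset.sum_congr rfl fun y _ => ?_
  rw [dif_pos y.2]


lemma natCast_zmod2_even {c : ℕ} (hc : Even c) : (c : ZMod 2) = 0 := by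
  obtain ⟨k, rfl⟩ := hc
  push_cast
  exact zmod2_add_self _

lemma natCast_zmod2_odd {c : ℕ} (hc : Odd c) : (c : ZMod 2) = 1 := by
  obtain ⟨k, rfl⟩ := hc
  push_cast
  have h2 : (2 : ZMod 2) = 0 := by decide
  rw [h2]
  ring

lemma ker_fun_zero (h : Bool) (f : Fin m → Finset (Fin (n - 1)))
    (hcond : if h then ∃! i, Odd (f i).card else ∀ i, Even (f i).card)
    (w : (Fin m × Fin (n - 1)) ⊕ Unit → ZMod 2)
    (hsupp : ∀ y ∉ wmk n h f, w y = 0)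
    (hrow : ∀ x ∈ wmk n h f, ∑ y, windmill n m x y * w y = 0) :
    ∀ y, w y = 0 := by
  have E1 : ∀ i, ∀ a ∈ f i,
      w (Sum.inl (i, a)) = (∑ b, w (Sum.inl (i, b))) + w (Sum.inr ()) := by
    intro i a ha
    have hk := hrow (Sum.inl (i, a)) (mem_wmk_inl.2 ha)
    rw [rowsum_inl] at hk
    have h3 : ∀ s t u : ZMod 2, s + t + u = 0 → t = s + u := by decide
    exact h3 _ _ _ hk
  have Hσ : ∀ i, (∑ b, w (Sum.inl (i, b)))
      = ((f i).card : ZMod 2) * ((∑ b, w (Sum.inl (i, b))) + w (Sum.inr ())) := by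
    intro i
    have hsub : ∑ b, w (Sum.inl (i, b)) = ∑ b ∈ f i, w (Sum.inl (i, b)) := by
      symm
      apply Finset.sum_subset (Finset.subset_univ _)
      intro b _ hb
      exact hsupp _ (by simpa using hb)
    calc ∑ b, w (Sum.inl (i, b)) = ∑ b ∈ f i, w (Sum.inl (i, b)) := hsub
      _ = ∑ _b ∈ f i, ((∑ b, w (Sum.inl (i, b))) + w (Sum.inr ())) :=
          Finset.sum_congr rfl fun b hb => E1 i b hb
      _ = ((f i).card : ZMod 2) * ((∑ b, w (Sum.inl (i, b))) + w (Sum.inr ())) := by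
          rw [Finset.sum_const, nsmul_eq_mul]
  have tail : (∀ i, (∑ b, w (Sum.inl (i, b))) = 0) → w (Sum.inr ()) = 0 → ∀ y, w y = 0 := by
    intro hσ0 hH0 y
    rcases y with ⟨i, a⟩ | u
    · by_cases ha : a ∈ f i
      · rw [E1 i a ha, hσ0, hH0, add_zero]
      · exact hsupp _ (by simpa using ha)
    · cases u
      exact hH0
  cases h with
  | false =>
    rw [if_neg (by decide)] at hcond
    have hH0 : w (Sum.inr ()) = 0 := hsupp _ (by simp)
    apply tail _ hH0
    intro i
    rw [Hσ i, natCast_zmod2_even (hcond i), zero_mul]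
  | true =>
    rw [if_pos rfl] at hcond
    obtain ⟨j, hj, hjuniq⟩ := hcond
    have hH0 : w (Sum.inr ()) = 0 := by
      have hx := Hσ j
      rw [natCast_zmod2_odd hj, one_mul] at hx
      have h2 : ∀ x y : ZMod 2, x = x + y → y = 0 := by decide
      exact h2 _ _ hx
    have hσeven : ∀ i, i ≠ j → (∑ b, w (Sum.inl (i, b))) = 0 := by
      intro i hij
      have hev : Even (f i).card := by
        by_contra ho
        exact hij (hjuniq i (Nat.not_even_iff_odd.1 ho))
      rw [Hσ i, natCast_zmod2_even hev, zero_mul]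
    have hσj : (∑ b, w (Sum.inl (j, b))) = 0 := by
      have hk := hrow (Sum.inr ()) (by simp)
      rw [rowsum_inr] at hk
      rw [Finset.sum_eq_single j (fun i _ hij => hσeven i hij) (by simp)] at hk
      exact hk
    apply tail _ hH0
    intro i
    by_cases hij : i = j
    · subst hij; exact hσj
    · exact hσeven i hij

lemma ker_zero (h : Bool) (f : Fin m → Finset (Fin (n - 1)))
    (hcond : if h then ∃! i, Odd (f i).card else ∀ i, Even (f i).card)
    (v : ↥(wmk n h f) → ZMod 2)
    (hker : psub (windmill n m) (wmk n h f) *ᵥ v = 0) : v = 0 := by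
  have hall := ker_fun_zero h f hcond
    (fun y => if hy : y ∈ wmk n h f then v ⟨y, hy⟩ else 0)
    (fun y hy => dif_neg hy)
    (fun x hx => by rw [← mulVec_psub v x hx, hker, Pi.zero_apply])
  funext y
  have hy : (if hy : ↑y ∈ wmk n h f then v ⟨↑y, hy⟩ else 0) = 0 := hall y.1
  rw [dif_pos y.2] at hy
  simpa using hy

lemma kernel_of_fun (T : Finset ((Fin m × Fin (n - 1)) ⊕ Unit))
    (w : (Fin m × Fin (n - 1)) ⊕ Unit → ZMod 2)
    (hsupp : ∀ y, y ∉ T → w y = 0)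
    (hrow : ∀ x ∈ T, ∑ y, windmill n m x y * w y = 0)
    (hnz : ∃ x, ∃ hx : x ∈ T, w x ≠ 0) :
    ∃ v ≠ 0, psub (windmill n m) T *ᵥ v = 0 := by
  refine ⟨fun y => w y.1, ?_, ?_⟩
  · obtain ⟨x, hx, hwx⟩ := hnz
    intro h0
    exact hwx (by simpa using congrFun h0 ⟨x, hx⟩)
  · funext y
    obtain ⟨x, hx⟩ := y
    rw [mulVec_psub _ x hx, Pi.zero_apply]
    have hdite : ∀ y, (if hy : y ∈ T then w (⟨y, hy⟩ : ↥T).1 else 0) = w y := by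
      intro y
      by_cases hy : y ∈ T
      · simp [hy]
      · simp [hy, hsupp y hy]
    simp only [hdite]
    exact hrow x hx

lemma cond_of_feas (h : Bool) (f : Fin m → Finset (Fin (n - 1)))
    (hdet : (psub (windmill n m) (wmk n h f)).det ≠ 0) :
    if h then ∃! i, Odd (f i).card else ∀ i, Even (f i).card := by
  by_contra hc
  apply hdet
  rw [← Matrix.exists_mulVec_eq_zero_iff]
  cases h with
  | false =>
    rw [if_neg (by decide)] at hc
    push_neg at hc
    obtain ⟨i₀, ho⟩ := hc
    have hodd : Odd (f i₀).card := Nat.not_even_iff_odd.1 ho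
    apply kernel_of_fun _
      (Sum.elim (fun p => if p.1 = i₀ ∧ p.2 ∈ f i₀ then 1 else 0) (fun _ => 0))
    · intro y hy
      rcases y with ⟨i, a⟩ | u
      · simp only [Sum.elim_inl]
        rw [if_neg]
        rintro ⟨rfl, ha⟩
        exact hy (mem_wmk_inl.2 ha)
      · rfl
    · intro x hx
      rcases x with ⟨i, a⟩ | u
      · have ha : a ∈ f i := mem_wmk_inl.1 hx
        rw [rowsum_inl]
        simp only [Sum.elim_inl, Sum.elim_inr]
        by_cases hi : i = i₀
        · subst hi
          rw [if_pos ⟨rfl, ha⟩]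
          simp only [true_and]
          rw [Finset.sum_boole]
          rw [Finset.filter_univ_mem, natCast_zmod2_odd hodd]
          decide
        · simp [hi]
      · cases u
        exact absurd (mem_wmk_inr.1 hx) (by decide)
    · have hpos : 0 < (f i₀).card := by
        rcases hodd with ⟨k, hk⟩; omega
      obtain ⟨b, hb⟩ := Finset.card_pos.1 hpos
      exact ⟨Sum.inl (i₀, b), mem_wmk_inl.2 hb, by simp [hb]⟩
  | true =>
    rw [if_pos rfl] at hc
    by_cases hex : ∃ i, Odd (f i).card
    · obtain ⟨i₁, h₁⟩ := hex
      have hex2 : ∃ i₂, Odd (f i₂).card ∧ i₂ ≠ i₁ := by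
        by_contra hno
        push_neg at hno
        exact hc ⟨i₁, h₁, hno⟩
      obtain ⟨i₂, h₂, hne⟩ := hex2
      apply kernel_of_fun _
        (Sum.elim (fun p => if (p.1 = i₁ ∨ p.1 = i₂) ∧ p.2 ∈ f p.1 then 1 else 0) (fun _ => 0))
      · intro y hy
        rcases y with ⟨i, a⟩ | u
        · simp only [Sum.elim_inl]
          rw [if_neg]
          rintro ⟨-, ha⟩
          exact hy (mem_wmk_inl.2 ha)
        · rfl
      · intro x hx
        have hsum : ∀ j : Fin m, Odd (f j).card →
            (∑ b, (if ((j : Fin m) = i₁ ∨ j = i₂) ∧ b ∈ f j then (1 : ZMod 2) else 0))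
              = if j = i₁ ∨ j = i₂ then 1 else 0 := by
          intro j hj
          by_cases hjc : j = i₁ ∨ j = i₂
          · rw [if_pos hjc]
            simp only [eq_true hjc, true_and]
            rw [Finset.sum_boole, Finset.filter_univ_mem, natCast_zmod2_odd hj]
          · rw [if_neg hjc]
            simp [eq_false hjc]
        rcases x with ⟨i, a⟩ | u
        · have ha : a ∈ f i := mem_wmk_inl.1 hx
          rw [rowsum_inl]
          simp only [Sum.elim_inl, Sum.elim_inr]
          by_cases hi : i = i₁ ∨ i = i₂
          · have hiodd : Odd (f i).card := by
              rcases hi with rfl | rfl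
              exacts [h₁, h₂]
            rw [hsum i hiodd, if_pos hi, if_pos ⟨hi, ha⟩]
            decide
          · simp [eq_false hi]
        · cases u
          rw [rowsum_inr]
          have hbl : ∀ j : Fin m, (∑ b : Fin (n - 1), Sum.elim
              (fun p : Fin m × Fin (n - 1) =>
                if (p.1 = i₁ ∨ p.1 = i₂) ∧ p.2 ∈ f p.1 then (1 : ZMod 2) else 0)
              (fun _ : Unit => (0 : ZMod 2)) (Sum.inl (j, b)))
              = (if j = i₁ then (1 : ZMod 2) else 0) + (if j = i₂ then 1 else 0) := by
            intro j
            simp only [Sum.elim_inl]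
            by_cases hj1 : j = i₁
            · have hv : (∑ b, if (j = i₁ ∨ j = i₂) ∧ b ∈ f j then (1 : ZMod 2) else 0) = 1 := by
                simp only [eq_true (Or.inl hj1 : j = i₁ ∨ j = i₂), true_and]
                rw [Finset.sum_boole, Finset.filter_univ_mem,
                  natCast_zmod2_odd (by rw [hj1]; exact h₁)]
              rw [hv, if_pos hj1, if_neg (fun hh : j = i₂ => hne (by rw [← hh]; exact hj1)),
                add_zero]
            · by_cases hj2 : j = i₂
              · have hv : (∑ b, if (j = i₁ ∨ j = i₂) ∧ b ∈ f j then (1 : ZMod 2) else 0) = 1 := by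
                  simp only [eq_true (Or.inr hj2 : j = i₁ ∨ j = i₂), true_and]
                  rw [Finset.sum_boole, Finset.filter_univ_mem,
                    natCast_zmod2_odd (by rw [hj2]; exact h₂)]
                rw [hv, if_neg hj1, if_pos hj2, zero_add]
              · simp [hj1, hj2]
          rw [Finset.sum_congr rfl (fun j _ => hbl j), Finset.sum_add_distrib,
            Finset.sum_ite_eq' Finset.univ i₁ (fun _ => (1 : ZMod 2)),
            Finset.sum_ite_eq' Finset.univ i₂ (fun _ => (1 : ZMod 2))]
          simp only [Finset.mem_univ, if_pos]
          decide
      · have hpos : 0 < (f i₁).card := by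
          rcases h₁ with ⟨k, hk⟩; omega
        obtain ⟨b, hb⟩ := Finset.card_pos.1 hpos
        refine ⟨Sum.inl (i₁, b), mem_wmk_inl.2 hb, ?_⟩
        simp [hb]
    · push_neg at hex
      have heven : ∀ i, Even (f i).card := fun i => Nat.not_odd_iff_even.1 (hex i)
      apply kernel_of_fun _
        (Sum.elim (fun p => if p.2 ∈ f p.1 then 1 else 0) (fun _ => 1))
      · intro y hy
        rcases y with ⟨i, a⟩ | u
        · simp only [Sum.elim_inl]
          rw [if_neg]
          intro ha
          exact hy (mem_wmk_inl.2 ha)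
        · cases u
          exact absurd (mem_wmk_inr.2 rfl) hy
      · intro x hx
        rcases x with ⟨i, a⟩ | u
        · have ha : a ∈ f i := mem_wmk_inl.1 hx
          rw [rowsum_inl]
          simp only [Sum.elim_inl, Sum.elim_inr]
          rw [if_pos ha, Finset.sum_boole, Finset.filter_univ_mem, natCast_zmod2_even (heven i)]
          decide
        · cases u
          rw [rowsum_inr]
          apply Finset.sum_eq_zero
          intro j _
          simp only [Sum.elim_inl]
          rw [Finset.sum_boole, Finset.filter_univ_mem, natCast_zmod2_even (heven j)]
      · exact ⟨Sum.inr (), mem_wmk_inr.2 rfl, by simp⟩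

lemma feas_iff (h : Bool) (f : Fin m → Finset (Fin (n - 1))) :
    (psub (windmill n m) (wmk n h f)).det ≠ 0 ↔
      (if h then ∃! i, Odd (f i).card else ∀ i, Even (f i).card) := by
  constructor
  · exact cond_of_feas h f
  · intro hcond hdet
    obtain ⟨v, hv0, hker⟩ := Matrix.exists_mulVec_eq_zero_iff.2 hdet
    exact hv0 (ker_zero h f hcond v hker)

-- ### per-blade card lemmas

lemma card_symmDiff_parity (g a : Finset (Fin (n - 1))) :
    (symmDiff g a).card % 2 = (g.card + a.card) % 2 := by
  have h0 : symmDiff g a = (g ∪ a) \ (g ∩ a) := by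
    rw [symmDiff_eq_sup_sdiff_inf, Finset.sup_eq_union, Finset.inf_eq_inter]
  have h1 : (symmDiff g a).card = (g ∪ a).card - (g ∩ a).card := by
    rw [h0, Finset.card_sdiff_of_subset (Finset.inter_subset_union)]
  have h2 : (g ∪ a).card + (g ∩ a).card = g.card + a.card :=
    Finset.card_union_add_card_inter g a
  have h3 : (g ∩ a).card ≤ (g ∪ a).card := Finset.card_le_card Finset.inter_subset_union
  omega

lemma odd_card_symmDiff_iff (g a : Finset (Fin (n - 1))) :
    Odd ((symmDiff g a).card) ↔ Odd (g.card + a.card) := by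
  rw [Nat.odd_iff, Nat.odd_iff, card_symmDiff_parity]

lemma card_symmDiff_le (g a : Finset (Fin (n - 1))) : (symmDiff g a).card ≤ n - 1 := by
  simpa using Finset.card_le_univ (symmDiff g a)

-- ### the value set of the twist and its bounds

variable (hA : Bool) (fA : Fin m → Finset (Fin (n - 1)))

/-- the feasibility condition -/
def cond (h : Bool) (f : Fin m → Finset (Fin (n - 1))) : Prop :=
  if h then ∃! i, Odd (f i).card else ∀ i, Even (f i).card

/-- cardinality of a twisted feasible set -/
def val (h : Bool) (f : Fin m → Finset (Fin (n - 1))) : ℕ :=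
  (∑ i, (symmDiff (f i) (fA i)).card) + (if xor h hA then 1 else 0)

lemma mem_K_iff (k : ℕ) :
    k ∈ {k | ∃ S, (psub (windmill n m) (symmDiff S (wmk n hA fA))).det ≠ 0 ∧ S.card = k}
      ↔ ∃ h f, cond h f ∧ val hA fA h f = k := by
  constructor
  · rintro ⟨S, hdet, rfl⟩
    set F := symmDiff S (wmk n hA fA) with hF
    refine ⟨decide ((Sum.inr () : (Fin m × Fin (n - 1)) ⊕ Unit) ∈ F), bladeSet F, ?_, ?_⟩
    · have := cond_of_feas (n := n) (decide ((Sum.inr () : (Fin m × Fin (n - 1)) ⊕ Unit) ∈ F))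
        (bladeSet F) (by rw [wmk_spec]; exact hdet)
      exact this
    · have hS : S = symmDiff F (wmk n hA fA) := by
        rw [hF, symmDiff_symmDiff_cancel_right]
      rw [hS, ← wmk_spec F, symmDiff_wmk, card_wmk]
      rw [wmk_spec F]
      rfl
  · rintro ⟨h, f, hcond, rfl⟩
    refine ⟨wmk n (xor h hA) (fun i => symmDiff (f i) (fA i)), ?_, ?_⟩
    · have hSA : symmDiff (wmk n (xor h hA) (fun i => symmDiff (f i) (fA i))) (wmk n hA fA)
          = wmk n h f := by
        rw [symmDiff_wmk]
        congr 1
        · cases h <;> cases hA <;> rfl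
        · funext i
          rw [symmDiff_symmDiff_cancel_right]
      rw [hSA]
      exact (feas_iff h f).2 hcond
    · rw [card_wmk]
      rfl

lemma val_bounds (hn : 3 ≤ n) (hodd : Odd n) (h : Bool) (f : Fin m → Finset (Fin (n - 1)))
    (hcond : cond h f) :
    (if hA then (if (Finset.univ.filter fun i => Odd ((fA i).card)).card = 0 then 1
        else (Finset.univ.filter fun i => Odd ((fA i).card)).card - 1)
      else (Finset.univ.filter fun i => Odd ((fA i).card)).card) ≤ val hA fA h f
    ∧ val hA fA h f ≤
      (if hA then (if (Finset.univ.filter fun i => Odd ((fA i).card)).card = 0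
          then m * (n - 1) + 1 else m * (n - 1) + 1 -
            (Finset.univ.filter fun i => Odd ((fA i).card)).card)
        else (if (Finset.univ.filter fun i => Odd ((fA i).card)).card = 0 then m * (n - 1)
          else m * (n - 1) + 2 - (Finset.univ.filter fun i => Odd ((fA i).card)).card)) := by
  have hNpos : 1 ≤ n - 1 := by omega
  have hNeven : (n - 1) % 2 = 0 := by
    rcases hodd with ⟨t, rfl⟩; omega
  set o := (Finset.univ.filter fun i => Odd ((fA i).card)).card with ho
  set s : Fin m → ℕ := fun i => (symmDiff (f i) (fA i)).card with hs
  set q := (Finset.univ.filter fun i => Odd (s i)).card with hq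
  -- q ≤ ∑ s
  have hq_le : q ≤ ∑ i, s i := by
    rw [hq, Finset.card_filter]
    apply Finset.sum_le_sum
    intro i _
    by_cases hoi : Odd (s i)
    · rw [if_pos hoi]
      rcases hoi with ⟨t, ht⟩; omega
    · rw [if_neg hoi]; omega
  -- ∑ s + q ≤ m * (n - 1)
  have hsum_le : (∑ i, s i) + q ≤ m * (n - 1) := by
    have hpt : ∀ i ∈ Finset.univ, s i + (if Odd (s i) then 1 else 0) ≤ n - 1 := by
      intro i _
      have hle : s i ≤ n - 1 := card_symmDiff_le _ _
      by_cases hoi : Odd (s i)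
      · rw [if_pos hoi]
        have : s i ≠ n - 1 := by
          rw [Nat.odd_iff] at hoi
          omega
        omega
      · rw [if_neg hoi]; omega
    calc (∑ i, s i) + q = ∑ i, (s i + (if Odd (s i) then 1 else 0)) := by
          rw [Finset.sum_add_distrib, hq, Finset.card_filter]
      _ ≤ ∑ _i : Fin m, (n - 1) := Finset.sum_le_sum hpt
      _ = m * (n - 1) := by rw [Finset.sum_const, Finset.card_univ, Fintype.card_fin, smul_eq_mul]
  have ho_le : o ≤ m := by
    rw [ho]
    have h1 := Finset.card_le_card (Finset.filter_subset
      (fun i => Odd ((fA i).card)) (Finset.univ : Finset (Fin m)))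
    simpa using h1
  have h2m : 2 * m ≤ m * (n - 1) := by
    have h2 : 2 ≤ n - 1 := by omega
    calc 2 * m = m * 2 := by ring
      _ ≤ m * (n - 1) := Nat.mul_le_mul_left m h2
  -- relation between q and o
  have hpar : ∀ i, Odd (s i) ↔ Odd ((f i).card + (fA i).card) := fun i =>
    odd_card_symmDiff_iff _ _
  cases h with
  | false =>
    have hcond' : ∀ i, Even ((f i).card) := by
      rw [cond, if_neg (by decide)] at hcond
      exact hcond
    have hqo : q = o := by
      rw [hq, ho]
      congr 1
      apply Finset.filter_congr
      intro i _
      rw [hpar i]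
      have := (hcond' i)
      rw [Nat.even_iff] at this
      rw [Nat.odd_iff, Nat.odd_iff, Nat.add_mod, this]
      simp
    have hval : val hA fA false f = (∑ i, s i) + (if xor false hA then 1 else 0) := rfl
    rw [hval]
    cases hA <;> by_cases ho0 : o = 0 <;> simp [ho0] <;> omega
  | true =>
    rw [cond, if_pos rfl] at hcond
    obtain ⟨j, hj, hjuniq⟩ := hcond
    have hfeven : ∀ i, i ≠ j → Even ((f i).card) := by
      intro i hij
      by_contra hx
      exact hij (hjuniq i (Nat.not_even_iff_odd.1 hx))
    have hOq : (Odd ((fA j).card) → q + 1 = o) ∧ (¬ Odd ((fA j).card) → q = o + 1) := by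
      constructor
      · intro hAj
        have hfe : (Finset.univ.filter fun i => Odd (s i))
            = (Finset.univ.filter fun i => Odd ((fA i).card)).erase j := by
          ext i
          rw [Finset.mem_erase]
          simp only [Finset.mem_filter, Finset.mem_univ, true_and]
          by_cases hij : i = j
          · have hLHS : ¬ Odd (s i) := by
              rw [hpar i, hij, Nat.odd_iff, Nat.add_mod, Nat.odd_iff.1 hj, Nat.odd_iff.1 hAj]
              simp
            simp [hij, (hij ▸ hLHS : ¬ Odd (s j))]
          · rw [hpar i]
            have := hfeven i hij
            rw [Nat.even_iff] at this
            rw [Nat.odd_iff, Nat.odd_iff, Nat.add_mod, this]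
            simp [hij]
        rw [hq, hfe, ho]
        apply Finset.card_erase_add_one
        simp only [Finset.mem_filter, Finset.mem_univ, true_and]
        exact hAj
      · intro hAj
        have hfe : (Finset.univ.filter fun i => Odd (s i))
            = insert j (Finset.univ.filter fun i => Odd ((fA i).card)) := by
          ext i
          rw [Finset.mem_insert]
          simp only [Finset.mem_filter, Finset.mem_univ, true_and]
          by_cases hij : i = j
          · have hLHS : Odd (s i) := by
              rw [hpar i, hij, Nat.odd_iff, Nat.add_mod, Nat.odd_iff.1 hj,
                Nat.even_iff.1 (Nat.not_odd_iff_even.1 hAj)]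
            simp [hij, (hij ▸ hLHS : Odd (s j))]
          · rw [hpar i]
            have := hfeven i hij
            rw [Nat.even_iff] at this
            rw [Nat.odd_iff, Nat.odd_iff, Nat.add_mod, this]
            simp [hij]
        rw [hq, hfe, ho]
        rw [Finset.card_insert_of_notMem]
        simp only [Finset.mem_filter, Finset.mem_univ, true_and]
        exact hAj
    have hcases : (q + 1 = o) ∨ (q = o + 1) := by
      by_cases hAj : Odd ((fA j).card)
      · exact Or.inl (hOq.1 hAj)
      · exact Or.inr (hOq.2 hAj)
    have hval : val hA fA true f = (∑ i, s i) + (if xor true hA then 1 else 0) := rfl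
    rw [hval]
    cases hA <;> by_cases ho0 : o = 0 <;> simp [ho0] <;> omega

lemma val_d (h : Bool) (d : Fin m → Finset (Fin (n - 1))) :
    val hA fA h (fun i => symmDiff (d i) (fA i))
      = (∑ i, (d i).card) + (if xor h hA then 1 else 0) := by
  rw [val]
  congr 1
  apply Finset.sum_congr rfl
  intro i _
  rw [symmDiff_symmDiff_cancel_right]

lemma odd_card_sd (d a : Finset (Fin (n - 1))) :
    Odd ((symmDiff d a).card) ↔ (d.card + a.card) % 2 = 1 := by
  rw [Nat.odd_iff, card_symmDiff_parity]

lemma even_card_sd (d a : Finset (Fin (n - 1))) :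
    Even ((symmDiff d a).card) ↔ (d.card + a.card) % 2 = 0 := by
  rw [Nat.even_iff, card_symmDiff_parity]

lemma exists_min (hn : 3 ≤ n) (hm : 1 ≤ m) :
    ∃ h f, cond h f ∧ val hA fA h f
      = (if hA then (if (Finset.univ.filter fun i => Odd ((fA i).card)).card = 0 then 1
          else (Finset.univ.filter fun i => Odd ((fA i).card)).card - 1)
        else (Finset.univ.filter fun i => Odd ((fA i).card)).card) := by
  have hNpos : 0 < n - 1 := by omega
  set e0 : Fin (n - 1) := ⟨0, hNpos⟩ with he0
  cases hA with
  | false =>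
    set d : Fin m → Finset (Fin (n - 1)) :=
      fun i => if Odd ((fA i).card) then {e0} else ∅ with hd
    refine ⟨false, fun i => symmDiff (d i) (fA i), ?_, ?_⟩
    · rw [cond, if_neg (by decide)]
      intro i
      rw [even_card_sd]
      by_cases hoi : Odd ((fA i).card)
      · have : d i = {e0} := if_pos hoi
        rw [this, Finset.card_singleton]
        rw [Nat.odd_iff] at hoi
        omega
      · have : d i = ∅ := if_neg hoi
        rw [this, Finset.card_empty]
        rw [Nat.not_odd_iff_even, Nat.even_iff] at hoi
        omega
    · rw [val_d, if_neg (by decide), if_neg (by decide), add_zero]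
      have hcard : ∀ i, (d i).card = if Odd ((fA i).card) then 1 else 0 := by
        intro i
        by_cases hoi : Odd ((fA i).card)
        · rw [hd]; simp [hoi]
        · rw [hd]; simp [hoi]
      rw [Finset.sum_congr rfl (fun i _ => hcard i), ← Finset.card_filter]
  | true =>
    by_cases ho0 : (Finset.univ.filter fun i => Odd ((fA i).card)).card = 0
    · have hev : ∀ i, ¬ Odd ((fA i).card) := by
        intro i hoi
        have : i ∈ (Finset.univ.filter fun i => Odd ((fA i).card)) := by simp [hoi]
        rw [Finset.card_eq_zero.1 ho0] at this
        simp at this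
      set j0 : Fin m := ⟨0, hm⟩ with hj0
      set d : Fin m → Finset (Fin (n - 1)) :=
        fun i => if i = j0 then {e0} else ∅ with hd
      refine ⟨true, fun i => symmDiff (d i) (fA i), ?_, ?_⟩
      · rw [cond, if_pos rfl]
        have hof : ∀ i, Odd ((symmDiff (d i) (fA i)).card) ↔ i = j0 := by
          intro i
          rw [odd_card_sd]
          have hAe := hev i
          rw [Nat.not_odd_iff_even, Nat.even_iff] at hAe
          by_cases hij : i = j0
          · have hdi : d i = {e0} := if_pos hij
            rw [hdi, Finset.card_singleton, eq_true hij, iff_true, hij]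
            have hAe' := hev j0
            rw [Nat.not_odd_iff_even, Nat.even_iff] at hAe'
            omega
          · have hdi : d i = ∅ := if_neg hij
            rw [hdi, Finset.card_empty, eq_false hij, iff_false]
            omega
        exact ⟨j0, (hof j0).2 rfl, fun y hy => (hof y).1 hy⟩
      · rw [val_d, if_neg (by decide), add_zero, if_pos rfl, if_pos ho0]
        have hcard : ∀ i, (d i).card = if i = j0 then 1 else 0 := by
          intro i
          by_cases hij : i = j0
          · rw [hd]; simp [hij]
          · rw [hd]; simp [hij]
        rw [Finset.sum_congr rfl (fun i _ => hcard i), Finset.sum_ite_eq' Finset.univ j0 (fun _ => 1)]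
        simp
    · obtain ⟨j, hjmem⟩ := Finset.card_pos.1 (Nat.pos_of_ne_zero ho0)
      have hjA : Odd ((fA j).card) := by
        simpa using hjmem
      set d : Fin m → Finset (Fin (n - 1)) :=
        fun i => if i ≠ j ∧ Odd ((fA i).card) then {e0} else ∅ with hd
      refine ⟨true, fun i => symmDiff (d i) (fA i), ?_, ?_⟩
      · rw [cond, if_pos rfl]
        have hof : ∀ i, Odd ((symmDiff (d i) (fA i)).card) ↔ i = j := by
          intro i
          rw [odd_card_sd]
          by_cases hij : i = j
          · have hdi : d i = ∅ := if_neg (by simp [hij])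
            rw [hdi, Finset.card_empty, eq_true hij, iff_true, hij]
            have hAj' := hjA
            rw [Nat.odd_iff] at hAj'
            omega
          · by_cases hoi : Odd ((fA i).card)
            · have hdi : d i = {e0} := if_pos ⟨hij, hoi⟩
              rw [hdi, Finset.card_singleton, eq_false hij, iff_false]
              rw [Nat.odd_iff] at hoi
              omega
            · have hdi : d i = ∅ := if_neg (by tauto)
              rw [hdi, Finset.card_empty, eq_false hij, iff_false]
              rw [Nat.not_odd_iff_even, Nat.even_iff] at hoi
              omega
        exact ⟨j, (hof j).2 rfl, fun y hy => (hof y).1 hy⟩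
      · rw [val_d, if_neg (by decide), add_zero, if_pos rfl, if_neg ho0]
        have hcard : ∀ i, (d i).card = if i ≠ j ∧ Odd ((fA i).card) then 1 else 0 := by
          intro i
          by_cases hc : i ≠ j ∧ Odd ((fA i).card)
          · rw [hd]; simp [hc]
          · rw [hd]; simp [hc]
        rw [Finset.sum_congr rfl (fun i _ => hcard i), ← Finset.card_filter]
        have hfe : (Finset.univ.filter fun i => i ≠ j ∧ Odd ((fA i).card))
            = (Finset.univ.filter fun i => Odd ((fA i).card)).erase j := by
          ext i
          rw [Finset.mem_erase]
          simp only [Finset.mem_filter, Finset.mem_univ, true_and]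
        rw [hfe, Finset.card_erase_of_mem hjmem]

lemma exists_max (hn : 3 ≤ n) (hodd : Odd n) (hm : 1 ≤ m) :
    ∃ h f, cond h f ∧ val hA fA h f
      = (if hA then (if (Finset.univ.filter fun i => Odd ((fA i).card)).card = 0
          then m * (n - 1) + 1 else m * (n - 1) + 1 -
            (Finset.univ.filter fun i => Odd ((fA i).card)).card)
        else (if (Finset.univ.filter fun i => Odd ((fA i).card)).card = 0 then m * (n - 1)
          else m * (n - 1) + 2 - (Finset.univ.filter fun i => Odd ((fA i).card)).card)) := by
  have hNpos : 0 < n - 1 := by omega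
  have hNeven : (n - 1) % 2 = 0 := by rcases hodd with ⟨t, rfl⟩; omega
  have hcu : (Finset.univ : Finset (Fin (n - 1))).card = n - 1 := by simp
  set e0 : Fin (n - 1) := ⟨0, hNpos⟩ with he0
  have hcc : ({e0}ᶜ : Finset (Fin (n - 1))).card = n - 1 - 1 := by
    rw [Finset.card_compl, Finset.card_singleton, Fintype.card_fin]
  by_cases ho0 : (Finset.univ.filter fun i => Odd ((fA i).card)).card = 0
  · -- all blades even : take complement everywhere, h = false
    have hev : ∀ i, ¬ Odd ((fA i).card) := by
      intro i hoi
      have : i ∈ (Finset.univ.filter fun i => Odd ((fA i).card)) := by simp [hoi]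
      rw [Finset.card_eq_zero.1 ho0] at this
      simp at this
    refine ⟨false, fun i => symmDiff Finset.univ (fA i), ?_, ?_⟩
    · rw [cond, if_neg (by decide)]
      intro i
      rw [even_card_sd, hcu]
      have := hev i
      rw [Nat.not_odd_iff_even, Nat.even_iff] at this
      omega
    · rw [val_d hA fA false (fun _ => Finset.univ)]
      rw [Finset.sum_congr rfl (fun (i : Fin m) _ => hcu), Finset.sum_const,
        Finset.card_univ, Fintype.card_fin, smul_eq_mul]
      cases hA with
      | false => rw [if_neg (by decide), add_zero, if_neg (by decide), if_pos ho0]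
      | true => rw [if_pos (by decide), if_pos rfl, if_pos ho0]
  · obtain ⟨j, hjmem⟩ := Finset.card_pos.1 (Nat.pos_of_ne_zero ho0)
    have hjA : Odd ((fA j).card) := by simpa using hjmem
    set d : Fin m → Finset (Fin (n - 1)) :=
      fun i => if i = j then Finset.univ
        else (if Odd ((fA i).card) then {e0}ᶜ else Finset.univ) with hd
    have hcard : ∀ i, (d i).card = if i = j then n - 1
        else (if Odd ((fA i).card) then n - 1 - 1 else n - 1) := by
      intro i
      by_cases hij : i = j
      · rw [hd]; simp only [if_pos hij]; exact hcu
      · by_cases hoi : Odd ((fA i).card)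
        · rw [hd]; simp only [if_neg hij, if_pos hoi]; exact hcc
        · rw [hd]; simp only [if_neg hij, if_neg hoi]; exact hcu
    refine ⟨true, fun i => symmDiff (d i) (fA i), ?_, ?_⟩
    · rw [cond, if_pos rfl]
      have hof : ∀ i, Odd ((symmDiff (d i) (fA i)).card) ↔ i = j := by
        intro i
        rw [odd_card_sd, hcard i]
        by_cases hij : i = j
        · rw [if_pos hij, eq_true hij, iff_true, hij]
          have hAj' := hjA
          rw [Nat.odd_iff] at hAj'
          omega
        · rw [if_neg hij, eq_false hij, iff_false]
          by_cases hoi : Odd ((fA i).card)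
          · rw [if_pos hoi]
            rw [Nat.odd_iff] at hoi
            omega
          · rw [if_neg hoi]
            rw [Nat.not_odd_iff_even, Nat.even_iff] at hoi
            omega
      exact ⟨j, (hof j).2 rfl, fun y hy => (hof y).1 hy⟩
    · rw [val_d]
      have hind : ∀ i ∈ Finset.univ, (d i).card + (if i ≠ j ∧ Odd ((fA i).card) then 1 else 0)
          = n - 1 := by
        intro i _
        rw [hcard i]
        by_cases hij : i = j
        · simp [hij]
        · by_cases hoi : Odd ((fA i).card)
          · rw [if_neg hij, if_pos hoi, if_pos ⟨hij, hoi⟩]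
            omega
          · rw [if_neg hij, if_neg hoi, if_neg (by tauto)]
            omega
      have hsum1 : (∑ i, (d i).card)
          + (∑ i, (if i ≠ j ∧ Odd ((fA i).card) then 1 else 0)) = m * (n - 1) := by
        rw [← Finset.sum_add_distrib, Finset.sum_congr rfl hind, Finset.sum_const,
          Finset.card_univ, Fintype.card_fin, smul_eq_mul]
      have hsum2 : (∑ i, (if i ≠ j ∧ Odd ((fA i).card) then 1 else 0)) + 1
          = (Finset.univ.filter fun i => Odd ((fA i).card)).card := by
        rw [← Finset.card_filter]
        have hfe : (Finset.univ.filter fun i => i ≠ j ∧ Odd ((fA i).card))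
            = (Finset.univ.filter fun i => Odd ((fA i).card)).erase j := by
          ext i
          rw [Finset.mem_erase]
          simp only [Finset.mem_filter, Finset.mem_univ, true_and]
        rw [hfe]
        exact Finset.card_erase_add_one hjmem
      have hole : (Finset.univ.filter fun i => Odd ((fA i).card)).card ≤ m := by
        have h1 := Finset.card_le_card (Finset.filter_subset
          (fun i => Odd ((fA i).card)) (Finset.univ : Finset (Fin m)))
        simpa using h1
      cases hA with
      | false =>
        rw [if_pos (by decide), if_neg (by decide), if_neg ho0]
        omega
      | true =>
        rw [if_neg (by decide), add_zero, if_pos rfl, if_neg ho0]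
        omega

lemma twistWidth_wmk (hn : 3 ≤ n) (hodd : Odd n) (hm : 1 ≤ m) :
    twistWidth (windmill n m) (wmk n hA fA)
      = if (Finset.univ.filter fun i => Odd ((fA i).card)).card = 0 then m * (n - 1)
        else m * (n - 1) + 2 - 2 * (Finset.univ.filter fun i => Odd ((fA i).card)).card := by
  obtain ⟨hmin, fmin, hcmin, hvmin⟩ := exists_min hA fA hn hm
  obtain ⟨hmax, fmax, hcmax, hvmax⟩ := exists_max hA fA hn hodd hm
  unfold twistWidth sysWidth
  set K := {k | ∃ S, (psub (windmill n m) (symmDiff S (wmk n hA fA))).det ≠ 0 ∧ S.card = k}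
    with hK
  have hMINmem : (if hA then (if (Finset.univ.filter fun i => Odd ((fA i).card)).card = 0 then 1
          else (Finset.univ.filter fun i => Odd ((fA i).card)).card - 1)
        else (Finset.univ.filter fun i => Odd ((fA i).card)).card) ∈ K :=
    (mem_K_iff hA fA _).2 ⟨hmin, fmin, hcmin, hvmin⟩
  have hMAXmem : (if hA then (if (Finset.univ.filter fun i => Odd ((fA i).card)).card = 0
          then m * (n - 1) + 1 else m * (n - 1) + 1 -
            (Finset.univ.filter fun i => Odd ((fA i).card)).card)
        else (if (Finset.univ.filter fun i => Odd ((fA i).card)).card = 0 then m * (n - 1)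
          else m * (n - 1) + 2 - (Finset.univ.filter fun i => Odd ((fA i).card)).card)) ∈ K :=
    (mem_K_iff hA fA _).2 ⟨hmax, fmax, hcmax, hvmax⟩
  have hub : ∀ k ∈ K, k ≤ (if hA then (if (Finset.univ.filter fun i => Odd ((fA i).card)).card = 0
          then m * (n - 1) + 1 else m * (n - 1) + 1 -
            (Finset.univ.filter fun i => Odd ((fA i).card)).card)
        else (if (Finset.univ.filter fun i => Odd ((fA i).card)).card = 0 then m * (n - 1)
          else m * (n - 1) + 2 - (Finset.univ.filter fun i => Odd ((fA i).card)).card)) := by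
    intro k hk
    obtain ⟨h, f, hc, rfl⟩ := (mem_K_iff hA fA _).1 hk
    exact (val_bounds hA fA hn hodd h f hc).2
  have hlb : ∀ k ∈ K, (if hA then
        (if (Finset.univ.filter fun i => Odd ((fA i).card)).card = 0 then 1
          else (Finset.univ.filter fun i => Odd ((fA i).card)).card - 1)
        else (Finset.univ.filter fun i => Odd ((fA i).card)).card) ≤ k := by
    intro k hk
    obtain ⟨h, f, hc, rfl⟩ := (mem_K_iff hA fA _).1 hk
    exact (val_bounds hA fA hn hodd h f hc).1
  have hsup : sSup K = (if hA then
        (if (Finset.univ.filter fun i => Odd ((fA i).card)).card = 0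
          then m * (n - 1) + 1 else m * (n - 1) + 1 -
            (Finset.univ.filter fun i => Odd ((fA i).card)).card)
        else (if (Finset.univ.filter fun i => Odd ((fA i).card)).card = 0 then m * (n - 1)
          else m * (n - 1) + 2 - (Finset.univ.filter fun i => Odd ((fA i).card)).card)) :=
    le_antisymm (csSup_le ⟨_, hMAXmem⟩ hub) (le_csSup ⟨_, hub⟩ hMAXmem)
  have hinf : sInf K = (if hA then
        (if (Finset.univ.filter fun i => Odd ((fA i).card)).card = 0 then 1
          else (Finset.univ.filter fun i => Odd ((fA i).card)).card - 1)
        else (Finset.univ.filter fun i => Odd ((fA i).card)).card) :=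
    le_antisymm (csInf_le (OrderBot.bddBelow _) hMINmem) (le_csInf ⟨_, hMAXmem⟩ hlb)
  rw [hsup, hinf]
  have hole : (Finset.univ.filter fun i => Odd ((fA i).card)).card ≤ m := by
    have h1 := Finset.card_le_card (Finset.filter_subset
      (fun i => Odd ((fA i).card)) (Finset.univ : Finset (Fin m)))
    simpa using h1
  have h2m : 2 * m ≤ m * (n - 1) := by
    have h2 : 2 ≤ n - 1 := by omega
    calc 2 * m = m * 2 := by ring
      _ ≤ m * (n - 1) := Nat.mul_le_mul_left m h2
  cases hA <;>
    by_cases ho0 : (Finset.univ.filter fun i => Odd ((fA i).card)).card = 0 <;>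
    simp [ho0] <;> omega

lemma card_filter_odd (hn : 3 ≤ n) :
    (Finset.univ.filter fun S : Finset (Fin (n - 1)) => Odd S.card).card = 2 ^ (n - 2) ∧
    (Finset.univ.filter fun S : Finset (Fin (n - 1)) => ¬ Odd S.card).card = 2 ^ (n - 2) := by
  have hN1 : 0 < n - 1 := by omega
  have hpar : ∀ S : Finset (Fin (n - 1)),
      (symmDiff S {(⟨0, hN1⟩ : Fin (n - 1))}).card % 2 = (S.card + 1) % 2 := by
    intro S
    rw [card_symmDiff_parity, Finset.card_singleton]
  have hcb : (Finset.univ.filter fun S : Finset (Fin (n - 1)) => Odd S.card).card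
      = (Finset.univ.filter fun S : Finset (Fin (n - 1)) => ¬ Odd S.card).card := by
    refine Finset.card_bij' (fun S _ => symmDiff S {(⟨0, hN1⟩ : Fin (n - 1))})
      (fun S _ => symmDiff S {(⟨0, hN1⟩ : Fin (n - 1))}) ?_ ?_ ?_ ?_
    · intro S hS
      simp only [Finset.mem_filter, Finset.mem_univ, true_and] at hS ⊢
      rw [Nat.odd_iff] at hS ⊢
      rw [hpar]
      omega
    · intro S hS
      simp only [Finset.mem_filter, Finset.mem_univ, true_and] at hS ⊢
      rw [Nat.odd_iff] at hS ⊢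
      rw [hpar]
      omega
    · intro S _
      simp [symmDiff_symmDiff_cancel_right]
    · intro S _
      simp [symmDiff_symmDiff_cancel_right]
  have htot := Finset.card_filter_add_card_filter_not
    (s := (Finset.univ : Finset (Finset (Fin (n - 1))))) (fun S => Odd S.card)
  rw [Finset.card_univ, Fintype.card_finset, Fintype.card_fin] at htot
  have hpow : 2 ^ (n - 1) = 2 ^ (n - 2) * 2 := by
    rw [← pow_succ]
    congr 1
    omega
  constructor <;> omega

open Polynomial in
lemma sum_S_X (hn : 3 ≤ n) :
    (∑ S : Finset (Fin (n - 1)), (if Odd S.card then (1 : Polynomial ℤ) else X ^ 2))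
      = (2 : Polynomial ℤ) ^ (n - 2) * (1 + X ^ 2) ∧
    (∑ S : Finset (Fin (n - 1)), (if Odd S.card then (0 : Polynomial ℤ) else 1))
      = (2 : Polynomial ℤ) ^ (n - 2) := by
  obtain ⟨hO, hE⟩ := card_filter_odd hn
  constructor
  · rw [Finset.sum_ite, Finset.sum_const, Finset.sum_const, hO, hE,
      nsmul_eq_mul, nsmul_eq_mul]
    push_cast
    ring
  · rw [Finset.sum_ite, Finset.sum_const, Finset.sum_const, hO, hE, smul_zero,
      nsmul_eq_mul]
    push_cast
    ring

open Polynomial in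
lemma pow_W_eq (hn : 3 ≤ n) (hm : 1 ≤ m) (f : Fin m → Finset (Fin (n - 1))) :
    (X : Polynomial ℤ) ^ (if (Finset.univ.filter fun i => Odd ((f i).card)).card = 0
        then m * (n - 1)
        else m * (n - 1) + 2 - 2 * (Finset.univ.filter fun i => Odd ((f i).card)).card)
      = X ^ (m * (n - 3) + 2) * (∏ i, (if Odd ((f i).card) then (1 : Polynomial ℤ) else X ^ 2))
        + (∏ i, (if Odd ((f i).card) then (0 : Polynomial ℤ) else 1))
          * (X ^ (m * (n - 1)) - X ^ (m * (n - 1) + 2)) := by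
  have hprodX : (∏ i, (if Odd ((f i).card) then (1 : Polynomial ℤ) else X ^ 2))
      = X ^ (2 * (m - (Finset.univ.filter fun i => Odd ((f i).card)).card)) := by
    have hpt : ∀ i : Fin m, (if Odd ((f i).card) then (1 : Polynomial ℤ) else X ^ 2)
        = X ^ (if Odd ((f i).card) then 0 else 2) := by
      intro i
      by_cases hoi : Odd ((f i).card) <;> simp [hoi]
    rw [Finset.prod_congr rfl (fun i _ => hpt i), Finset.prod_pow_eq_pow_sum]
    congr 1
    have h1 : ∑ i : Fin m, (if Odd ((f i).card) then 0 else 2)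
        = 2 * ∑ i : Fin m, (if Odd ((f i).card) then 0 else 1) := by
      rw [Finset.mul_sum]
      apply Finset.sum_congr rfl
      intro i _
      by_cases hoi : Odd ((f i).card) <;> simp [hoi]
    have h2 : ∑ i : Fin m, (if Odd ((f i).card) then 0 else 1)
        = (Finset.univ.filter fun i => ¬ Odd ((f i).card)).card := by
      rw [Finset.card_filter]
      apply Finset.sum_congr rfl
      intro i _
      by_cases hoi : Odd ((f i).card) <;> simp [hoi]
    have h3 := Finset.card_filter_add_card_filter_not
      (s := (Finset.univ : Finset (Fin m))) (fun i => Odd ((f i).card))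
    rw [Finset.card_univ, Fintype.card_fin] at h3
    omega
  have hole : (Finset.univ.filter fun i => Odd ((f i).card)).card ≤ m := by
    have h1 := Finset.card_le_card (Finset.filter_subset
      (fun i => Odd ((f i).card)) (Finset.univ : Finset (Fin m)))
    simpa using h1
  have h4 : n - 1 = (n - 3) + 2 := by omega
  have h5 : m * (n - 1) = m * (n - 3) + 2 * m := by
    rw [h4, Nat.mul_add]
    omega
  by_cases ho0 : (Finset.univ.filter fun i => Odd ((f i).card)).card = 0
  · have hall : ∀ i, ¬ Odd ((f i).card) := by
      intro i hoi
      have : i ∈ Finset.univ.filter fun i => Odd ((f i).card) := by simp [hoi]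
      rw [Finset.card_eq_zero.1 ho0] at this
      simp at this
    have hpI : (∏ i, (if Odd ((f i).card) then (0 : Polynomial ℤ) else 1)) = 1 := by
      rw [Finset.prod_congr rfl (fun i _ => if_neg (hall i)), Finset.prod_const_one]
    rw [if_pos ho0, hprodX, hpI, one_mul, ho0, Nat.sub_zero, ← pow_add]
    have hexp : m * (n - 3) + 2 + 2 * m = m * (n - 1) + 2 := by omega
    rw [hexp]
    ring
  · obtain ⟨j, hjmem⟩ := Finset.card_pos.1 (Nat.pos_of_ne_zero ho0)
    have hjodd : Odd ((f j).card) := by simpa using hjmem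
    have hpI : (∏ i, (if Odd ((f i).card) then (0 : Polynomial ℤ) else 1)) = 0 :=
      Finset.prod_eq_zero (Finset.mem_univ j) (if_pos hjodd)
    rw [if_neg ho0, hprodX, hpI, zero_mul, add_zero, ← pow_add]
    congr 1
    omega

end WindmillAux

open WindmillAux in
theorem twistPoly_windmill_odd' (n m : ℕ) (hn : 3 ≤ n) (hnodd : Odd n) (hm : 1 ≤ m) :
    (∑ A : Finset ((Fin m × Fin (n - 1)) ⊕ Unit),
        (X : Polynomial ℤ) ^ twistWidth (windmill n m) A)
      = 2 ^ (m * (n - 2) + 1) * X ^ (m * (n - 3) + 2)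
        * ((X ^ 2 + 1) ^ m - X ^ (2 * m) + X ^ (2 * m - 2)) := by
  classical
  have hbij : Function.Bijective (fun p : Bool × (Fin m → Finset (Fin (n - 1))) =>
      wmk n p.1 p.2) := by
    constructor
    · rintro ⟨h1, f1⟩ ⟨h2, f2⟩ hpq
      simp only at hpq
      have hmem := Finset.ext_iff.1 hpq
      have hh : h1 = h2 := by
        have hx := hmem (Sum.inr ())
        rw [mem_wmk_inr, mem_wmk_inr] at hx
        cases h1 <;> cases h2 <;> simp_all
      have hf : f1 = f2 := by
        funext i
        ext a
        have hx := hmem (Sum.inl (i, a))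
        rwa [mem_wmk_inl, mem_wmk_inl] at hx
      rw [Prod.mk.injEq]
      exact ⟨hh, hf⟩
    · intro T
      exact ⟨(decide ((Sum.inr () : (Fin m × Fin (n - 1)) ⊕ Unit) ∈ T), bladeSet T),
        wmk_spec T⟩
  rw [← Fintype.sum_bijective _ hbij
    (fun p => (X : Polynomial ℤ) ^ twistWidth (windmill n m) (wmk n p.1 p.2))
    (fun A => (X : Polynomial ℤ) ^ twistWidth (windmill n m) A) (fun p => rfl)]
  rw [Fintype.sum_prod_type]
  have hsumf : ∀ h : Bool, ∑ f : Fin m → Finset (Fin (n - 1)),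
      (X : Polynomial ℤ) ^ twistWidth (windmill n m) (wmk n h f)
      = X ^ (m * (n - 3) + 2) * ((2 : Polynomial ℤ) ^ (n - 2) * (1 + X ^ 2)) ^ m
        + ((2 : Polynomial ℤ) ^ (n - 2)) ^ m
          * (X ^ (m * (n - 1)) - X ^ (m * (n - 1) + 2)) := by
    intro h
    have hinner : ∀ f : Fin m → Finset (Fin (n - 1)),
        (X : Polynomial ℤ) ^ twistWidth (windmill n m) (wmk n h f)
        = X ^ (m * (n - 3) + 2) * (∏ i, (if Odd ((f i).card) then (1 : Polynomial ℤ) else X ^ 2))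
          + (∏ i, (if Odd ((f i).card) then (0 : Polynomial ℤ) else 1))
            * (X ^ (m * (n - 1)) - X ^ (m * (n - 1) + 2)) := by
      intro f
      rw [twistWidth_wmk h f hn hnodd hm, pow_W_eq hn hm f]
    rw [Finset.sum_congr rfl (fun f _ => hinner f)]
    rw [Finset.sum_add_distrib, ← Finset.mul_sum, ← Finset.sum_mul]
    have hswap1 : (∏ _i : Fin m, ∑ S ∈ (Finset.univ : Finset (Finset (Fin (n - 1)))),
          (if Odd S.card then (1 : Polynomial ℤ) else X ^ 2))
        = ∑ f ∈ Fintype.piFinset (fun _ : Fin m =>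
            (Finset.univ : Finset (Finset (Fin (n - 1))))),
          ∏ i, (if Odd ((f i).card) then (1 : Polynomial ℤ) else X ^ 2) :=
      Finset.prod_univ_sum _ _
    have hswap2 : (∏ _i : Fin m, ∑ S ∈ (Finset.univ : Finset (Finset (Fin (n - 1)))),
          (if Odd S.card then (0 : Polynomial ℤ) else 1))
        = ∑ f ∈ Fintype.piFinset (fun _ : Fin m =>
            (Finset.univ : Finset (Finset (Fin (n - 1))))),
          ∏ i, (if Odd ((f i).card) then (0 : Polynomial ℤ) else 1) :=
      Finset.prod_univ_sum _ _
    rw [Fintype.piFinset_univ] at hswap1 hswap2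
    congr 1
    · congr 1
      rw [← hswap1]
      rw [Finset.prod_congr rfl (fun (i : Fin m) _ => (sum_S_X hn).1),
        Finset.prod_const, Finset.card_univ, Fintype.card_fin]
    · congr 1
      rw [← hswap2]
      rw [Finset.prod_congr rfl (fun (i : Fin m) _ => (sum_S_X hn).2),
        Finset.prod_const, Finset.card_univ, Fintype.card_fin]
  rw [Fintype.sum_bool, hsumf true, hsumf false]
  have h5 : m * (n - 1) = m * (n - 3) + 2 * m := by
    have h4 : n - 1 = (n - 3) + 2 := by omega
    rw [h4, Nat.mul_add]
    omega
  have e2 : m * (n - 1) + 2 = (m * (n - 3) + 2) + 2 * m := by omega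
  have e1 : m * (n - 1) = (m * (n - 3) + 2) + (2 * m - 2) := by omega
  rw [e2, e1]
  simp only [pow_add, mul_pow, ← pow_mul]
  rw [show m * (n - 2) = (n - 2) * m from Nat.mul_comm m (n - 2)]
  ring




/-- Proposition 4.8, odd case: for odd `n ≥ 3` and `m ≥ 1`,
`T_{K_n^{(m)}}(z) = 2^{m(n−2)+1} · z^{m(n−3)+2} · ((z²+1)^m − z^{2m} + z^{2m−2})`. -/
theorem twistPoly_windmill_odd (n m : ℕ) (hn : 3 ≤ n) (hnodd : Odd n) (hm : 1 ≤ m) :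
    twistPoly (windmill n m)
      = 2 ^ (m * (n - 2) + 1) * X ^ (m * (n - 3) + 2)
        * ((X ^ 2 + 1) ^ m - X ^ (2 * m) + X ^ (2 * m - 2)) := by
  unfold twistPoly
  exact twistPoly_windmill_odd' n m hn hnodd hm
end

section
/- For every integer n ≥ 2, the twist polynomial of the one-point join K_n ∨ K_n of two disjoint copies of the unlooped complete graph K_n (joined by identifying one vertex from each copy) satisfies T_{K_n ∨ K_n}(z) = 2^{2n−3} · z^{2n−4} · (3z² + 1) in ℤ[z]. -/
open Matrix Polynomial

/-!
Call the non-hub vertices of each copy of `K_n` a blade. Over `𝔽₂`, the principal submatrix of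
`K_n ∨ K_n` on `S` is nonsingular exactly when either the hub is not in `S` and `S` meets both
blades in an even number of vertices, or the hub is in `S` and exactly one blade meets `S` in an
odd number of vertices: a kernel vector supported on `S`
must take the value `σ_c + w(hub)` on the `c`-th blade, where `σ_c` is its sum over that blade.
Feasibility thus depends only on parities of the three parts of `S`, and these parities add up
under symmetric difference. So with `k = n - 1`, the width of `D(G) * A` is a small optimisation
over sizes `x, y ≤ k`, `g ≤ 1` with prescribed parities: it is `2k - 2` when
`|A ∩ blade_c| + k·|A ∩ hub|` is odd for both blades, and `2k` otherwise. A quarter of the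
`2^(2k+1)` sets `A` are of the first kind.
-/

open Finset

section
variable {K ι : Type*} [Field K] [Fintype ι]

lemma psub_mulVec_comp_val (M : Matrix ι ι K) {S : Finset ι} {w : ι → K}
    (hw : ∀ i ∉ S, w i = 0) (i : S) : (psub M S *ᵥ (w ∘ (↑))) i = (M *ᵥ w) i := by
  simp only [mulVec, dotProduct, psub, submatrix_apply, Function.comp_apply]
  rw [sum_coe_sort S (fun j => M i j * w j)]
  exact sum_subset (subset_univ S) fun j _ hj => by simp [hw j hj]

lemma det_psub_ne_zero_iff [DecidableEq ι] (M : Matrix ι ι K) (S : Finset ι) :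
    (psub M S).det ≠ 0 ↔
      ∀ w : ι → K, (∀ i ∉ S, w i = 0) → (∀ i ∈ S, (M *ᵥ w) i = 0) → w = 0 := by
  rw [Ne, ← exists_mulVec_eq_zero_iff, not_exists]
  constructor
  · intro h w hS hker
    by_contra hw
    refine h (w ∘ (↑)) ⟨fun h0 => hw (funext fun i => ?_), funext fun i => ?_⟩
    · by_cases hi : i ∈ S
      · exact congrFun h0 ⟨i, hi⟩
      · exact hS i hi
    · rw [psub_mulVec_comp_val M hS]
      exact hker i i.2
  · rintro h v ⟨hv, hker⟩
    let w : ι → K := fun i => if hi : i ∈ S then v ⟨i, hi⟩ else 0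
    have hS : ∀ i ∉ S, w i = 0 := fun i hi => dif_neg hi
    have hwv : w ∘ (↑) = v := funext fun i => dif_pos i.2
    have hw : w = 0 := h w hS fun i hi => by
      rw [← psub_mulVec_comp_val M hS ⟨i, hi⟩, hwv, hker, Pi.zero_apply]
    exact hv (by rw [← hwv, hw]; rfl)
end

lemma Finset.card_symmDiff_add_two_mul_card_inter {α : Type*} [DecidableEq α] (s t : Finset α) :
    #(symmDiff s t) + 2 * #(s ∩ t) = #s + #t := by
  rw [symmDiff_eq_sup_sdiff_inf, sup_eq_union, inf_eq_inter,
    card_sdiff_of_subset inter_subset_union, ← card_union_add_card_inter]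
  have := card_le_card (inter_subset_union (s := s) (t := t))
  omega

lemma Finset.card_filter_card_add_mod_two_eq_one {α : Type*} [Fintype α] [Nonempty α] (r : ℕ) :
    #{s : Finset α | (#s + r) % 2 = 1} = 2 ^ (Fintype.card α - 1) := by
  have halt : ∑ s : Finset α, (-1 : ℤ) ^ #s = 0 := by
    rw [← powerset_univ]
    exact sum_powerset_neg_one_pow_card_of_nonempty univ_nonempty
  have hind : ∀ s : Finset α,
      2 * (if (#s + r) % 2 = 1 then 1 else 0 : ℤ) = 1 - (-1) ^ r * (-1) ^ #s := by
    intro s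
    simp only [neg_one_pow_eq_ite, Nat.even_iff]
    split_ifs <;> omega
  have h2 : 2 * (#{s : Finset α | (#s + r) % 2 = 1} : ℤ) = 2 ^ Fintype.card α := by
    rw [card_filter, Nat.cast_sum, mul_sum]
    simp only [Nat.cast_ite, Nat.cast_one, Nat.cast_zero, hind, sum_sub_distrib, ← mul_sum,
      halt, mul_zero, sub_zero, sum_const, card_univ, Fintype.card_finset, nsmul_eq_mul, mul_one]
    norm_cast
  have h2' : 2 * #{s : Finset α | (#s + r) % 2 = 1} = 2 ^ Fintype.card α := by exact_mod_cast h2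
  rw [← Nat.two_pow_pred_mul_two Fintype.card_pos] at h2'
  omega

lemma Finset.toRight_symmDiff {α β : Type*} [DecidableEq α] [DecidableEq β]
    (u v : Finset (α ⊕ β)) : (symmDiff u v).toRight = symmDiff u.toRight v.toRight := by
  ext; simp [mem_symmDiff]

lemma Finset.card_toRight_le_one {α : Type*} (u : Finset (α ⊕ Unit)) : #u.toRight ≤ 1 :=
  (card_le_univ _).trans_eq Fintype.card_unit

lemma Finset.card_toRight_eq_ite {α : Type*} [DecidableEq α] (u : Finset (α ⊕ Unit)) :
    #u.toRight = if .inr () ∈ u then 1 else 0 := by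
  split_ifs with h
  · exact card_eq_one.2 ⟨(), by ext ⟨⟩; simp [h]⟩
  · exact card_eq_zero.2 (by ext ⟨⟩; simp [h])

lemma ZMod.natCast_eq_of_mod_two_eq {x r : ℕ} (h : x % 2 = r) : (x : ZMod 2) = r := by
  rw [← ZMod.natCast_mod, h]

namespace Windmill
variable {n m : ℕ}

lemma windmill_mulVec_inl (w : (Fin m × Fin (n - 1)) ⊕ Unit → ZMod 2) (c : Fin m)
    (a : Fin (n - 1)) :
    (windmill n m *ᵥ w) (.inl (c, a)) =
      ∑ b, w (.inl (c, b)) + w (.inl (c, a)) + w (.inr ()) := by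
  have hblade : ∑ p : Fin m × Fin (n - 1), (if c = p.1 ∧ (c, a) ≠ p then w (.inl p) else 0) =
      ∑ b, w (.inl (c, b)) - w (.inl (c, a)) := by
    rw [Fintype.sum_prod_type, sum_eq_single c (fun d _ hd => by simp [Ne.symm hd]) (by simp),
      Fintype.sum_eq_add_sum_compl a, Fintype.sum_eq_add_sum_compl a (fun b => w (.inl (c, b)))]
    simp only [true_and, ne_eq, Prod.mk.injEq, not_true_eq_false, if_false, zero_add,
      add_sub_cancel_left]
    exact sum_congr rfl fun b hb => if_pos fun h => (mem_compl.1 hb) (by simp [h])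
  simp [mulVec, dotProduct, windmill, Fintype.sum_sum_type, ite_mul, hblade, sub_eq_add_neg,
    ZMod.neg_eq_self_mod_two]

lemma windmill_mulVec_inr (w : (Fin m × Fin (n - 1)) ⊕ Unit → ZMod 2) :
    (windmill n m *ᵥ w) (.inr ()) = ∑ p, w (.inl p) := by
  simp [mulVec, dotProduct, windmill, Fintype.sum_sum_type]

abbrev Vertex (n : ℕ) := (Fin 2 × Fin (n - 1)) ⊕ Unit

def blade (c : Fin 2) (S : Finset (Vertex n)) : Finset (Fin (n - 1)) := {a | .inl (c, a) ∈ S}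

@[simp]
lemma mem_blade {c : Fin 2} {S : Finset (Vertex n)} {a : Fin (n - 1)} :
    a ∈ blade c S ↔ .inl (c, a) ∈ S := by
  simp [blade]

def splitEquiv :
    Finset (Vertex n) ≃ (Finset (Fin (n - 1)) × Finset (Fin (n - 1))) × Finset Unit where
  toFun S := ((blade 0 S, blade 1 S), S.toRight)
  invFun p := disjSum {q | q.2 ∈ if q.1 = 0 then p.1.1 else p.1.2} p.2
  left_inv S := by
    ext (⟨c, a⟩ | u)
    · rw [inl_mem_disjSum, mem_filter]
      split_ifs with hc
      · obtain rfl : c = 0 := hc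
        simp
      · obtain rfl : c = 1 := Fin.eq_one_of_ne_zero c hc
        simp
    · simp
  right_inv p := by ext <;> simp [blade]

lemma card_eq_card_blade_add (S : Finset (Vertex n)) :
    #S = #(blade 0 S) + #(blade 1 S) + #S.toRight := by
  rw [← card_toLeft_add_card_toRight]
  congr 1
  calc #S.toLeft = ∑ p : Fin 2 × Fin (n - 1), if .inl p ∈ S then 1 else 0 := by
        rw [sum_boole]; congr 1; ext; simp
    _ = #(blade 0 S) + #(blade 1 S) := by
        rw [Fintype.sum_prod_type, Fin.sum_univ_two, blade, blade, card_filter, card_filter]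

lemma blade_symmDiff (c : Fin 2) (S A : Finset (Vertex n)) :
    blade c (symmDiff S A) = symmDiff (blade c S) (blade c A) := by
  ext; simp [blade, mem_symmDiff]

lemma card_blade_le (c : Fin 2) (S : Finset (Vertex n)) : #(blade c S) ≤ n - 1 :=
  (card_le_univ _).trans_eq (Fintype.card_fin _)

lemma windmill_two_mulVec_inr (w : Vertex n → ZMod 2) :
    (windmill n 2 *ᵥ w) (.inr ()) = ∑ a, w (.inl (0, a)) + ∑ a, w (.inl (1, a)) := by
  rw [windmill_mulVec_inr, Fintype.sum_prod_type, Fin.sum_univ_two]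

lemma sum_blade_eq_sum {S : Finset (Vertex n)} {w : Vertex n → ZMod 2}
    (hS : ∀ v ∉ S, w v = 0) (c : Fin 2) :
    ∑ a, w (.inl (c, a)) = ∑ a ∈ blade c S, w (.inl (c, a)) :=
  (sum_subset (subset_univ _) fun _ _ ha => hS _ (mt mem_blade.2 ha)).symm

def FeasibleParity (x y g : ℕ) : Prop :=
  g % 2 = 0 ∧ x % 2 = 0 ∧ y % 2 = 0 ∨ g % 2 = 1 ∧ (x + y) % 2 = 1

lemma eq_zero_of_mulVec_eq_zero {S : Finset (Vertex n)}
    (hF : FeasibleParity #(blade 0 S) #(blade 1 S) #S.toRight) {w : Vertex n → ZMod 2}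
    (hS : ∀ v ∉ S, w v = 0) (hker : ∀ v ∈ S, (windmill n 2 *ᵥ w) v = 0) : w = 0 := by
  obtain ⟨σ, hσ_def⟩ : ∃ σ : Fin 2 → ZMod 2, ∀ c, σ c = ∑ a, w (.inl (c, a)) := ⟨_, fun _ => rfl⟩
  have hrow : ∀ c a, .inl (c, a) ∈ S → w (.inl (c, a)) = σ c + w (.inr ()) := by
    intro c a h
    have := hker _ h
    rw [windmill_mulVec_inl, ← hσ_def] at this
    linear_combination (norm := (ring_nf; reduce_mod_char)) this
  have hσ : ∀ c, σ c = #(blade c S) * (σ c + w (.inr ())) := by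
    intro c
    conv_lhs => rw [hσ_def, sum_blade_eq_sum hS c]
    rw [sum_congr rfl fun a ha => hrow c a (mem_blade.1 ha), sum_const, nsmul_eq_mul]
  have hσ_zero : ∀ c, #(blade c S) % 2 = 0 → σ c = 0 := fun c hc => by
    simpa [ZMod.natCast_eq_of_mod_two_eq hc] using hσ c
  have hhub_zero : ∀ c, #(blade c S) % 2 = 1 → w (.inr ()) = 0 := fun c hc => by
    simpa [ZMod.natCast_eq_of_mod_two_eq hc] using hσ c
  suffices w (.inr ()) = 0 ∧ σ 0 = 0 ∧ σ 1 = 0 by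
    obtain ⟨hhub, hσ0, hσ1⟩ := this
    ext (⟨c, a⟩ | ⟨⟩)
    · by_cases h : .inl (c, a) ∈ S
      · rw [hrow c a h, hhub, add_zero]
        fin_cases c
        exacts [hσ0, hσ1]
      · exact hS _ h
    · exact hhub
  rw [card_toRight_eq_ite] at hF
  by_cases hhub : .inr () ∈ S
  · have hsum : σ 0 + σ 1 = 0 := by
      rw [hσ_def, hσ_def, ← windmill_two_mulVec_inr]
      exact hker _ hhub
    rw [FeasibleParity, if_pos hhub] at hF
    rcases Nat.mod_two_eq_zero_or_one #(blade 0 S) with h0 | h0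
    · have h1 : #(blade 1 S) % 2 = 1 := by omega
      refine ⟨hhub_zero 1 h1, hσ_zero 0 h0, ?_⟩
      linear_combination hsum - hσ_zero 0 h0
    · have h1 : #(blade 1 S) % 2 = 0 := by omega
      refine ⟨hhub_zero 0 h0, ?_, hσ_zero 1 h1⟩
      linear_combination hsum - hσ_zero 1 h1
  · rw [FeasibleParity, if_neg hhub] at hF
    exact ⟨hS _ hhub, hσ_zero 0 (by omega), hσ_zero 1 (by omega)⟩

def blockVector (S : Finset (Vertex n)) (ε : Fin 2 → ZMod 2) (η : ZMod 2) : Vertex n → ZMod 2 :=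
  fun v => if v ∈ S then Sum.elim (fun p => ε p.1) (fun _ => η) v else 0

lemma sum_blockVector_inl (S : Finset (Vertex n)) (ε : Fin 2 → ZMod 2) (η : ZMod 2) (c : Fin 2) :
    ∑ a, blockVector S ε η (.inl (c, a)) = #(blade c S) * ε c := by
  simp [blockVector, sum_ite, blade]

lemma windmill_mulVec_blockVector_inl {S : Finset (Vertex n)} (ε : Fin 2 → ZMod 2) (η : ZMod 2)
    {c : Fin 2} {a : Fin (n - 1)} (h : .inl (c, a) ∈ S) :
    (windmill n 2 *ᵥ blockVector S ε η) (.inl (c, a)) =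
      (#(blade c S) + 1) * ε c + blockVector S ε η (.inr ()) := by
  rw [windmill_mulVec_inl, sum_blockVector_inl, blockVector, if_pos h, Sum.elim_inl]
  ring

lemma windmill_mulVec_blockVector_inr (S : Finset (Vertex n)) (ε : Fin 2 → ZMod 2) (η : ZMod 2) :
    (windmill n 2 *ᵥ blockVector S ε η) (.inr ()) =
      #(blade 0 S) * ε 0 + #(blade 1 S) * ε 1 := by
  rw [windmill_two_mulVec_inr, sum_blockVector_inl, sum_blockVector_inl]

lemma blockVector_ne_zero {S : Finset (Vertex n)} {ε : Fin 2 → ZMod 2} {c : Fin 2} (η : ZMod 2)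
    (hc : ε c = 1) (hpos : 0 < #(blade c S)) : blockVector S ε η ≠ 0 := by
  intro h
  obtain ⟨a, ha⟩ := card_pos.1 hpos
  simpa [blockVector, mem_blade.1 ha, hc] using congrFun h (.inl (c, a))

lemma exists_mulVec_eq_zero_of_odd_blade {S : Finset (Vertex n)} {c : Fin 2}
    (hhub : .inr () ∉ S) (hc : #(blade c S) % 2 = 1) :
    ∃ w : Vertex n → ZMod 2, (∀ v ∉ S, w v = 0) ∧ (∀ v ∈ S, (windmill n 2 *ᵥ w) v = 0) ∧
      w ≠ 0 := by
  refine ⟨blockVector S (Pi.single c 1) 0, fun _ hv => if_neg hv, ?_,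
    blockVector_ne_zero (c := c) _ (by simp) (by omega)⟩
  rintro (⟨d, a⟩ | ⟨⟩) hv
  · rw [windmill_mulVec_blockVector_inl _ _ hv, blockVector, if_neg hhub, add_zero]
    by_cases hd : d = c
    · subst hd
      rw [Pi.single_eq_same, ZMod.natCast_eq_of_mod_two_eq hc]
      decide
    · rw [Pi.single_eq_of_ne hd, mul_zero]
  · exact absurd hv hhub

lemma exists_mulVec_eq_zero_of_hub_mem {S : Finset (Vertex n)} (hhub : .inr () ∈ S)
    (heven : (#(blade 0 S) + #(blade 1 S)) % 2 = 0) :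
    ∃ w : Vertex n → ZMod 2, (∀ v ∉ S, w v = 0) ∧ (∀ v ∈ S, (windmill n 2 *ᵥ w) v = 0) ∧
      w ≠ 0 := by
  have hpar : ∀ c, (#(blade c S) : ZMod 2) = #(blade 0 S) := by
    have := ZMod.natCast_eq_of_mod_two_eq heven
    push_cast at this
    refine Fin.forall_fin_two.2 ⟨rfl, ?_⟩
    linear_combination (norm := (ring_nf; reduce_mod_char)) this
  refine ⟨blockVector S 1 (1 + #(blade 0 S)), fun _ hv => if_neg hv, ?_, ?_⟩
  · rintro (⟨c, a⟩ | ⟨⟩) hv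
    · rw [windmill_mulVec_blockVector_inl _ _ hv, blockVector, if_pos hhub, Sum.elim_inr, hpar c,
        Pi.one_apply]
      ring_nf
      reduce_mod_char
    · rw [windmill_mulVec_blockVector_inr, hpar 1, Pi.one_apply, Pi.one_apply]
      ring_nf
      reduce_mod_char
  · rcases Nat.mod_two_eq_zero_or_one #(blade 0 S) with h0 | h0
    · intro h
      simpa [blockVector, hhub, ZMod.natCast_eq_of_mod_two_eq h0] using congrFun h (.inr ())
    · exact blockVector_ne_zero (c := 0) _ rfl (by omega)

theorem det_psub_windmill_ne_zero_iff (S : Finset (Vertex n)) :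
    (psub (windmill n 2) S).det ≠ 0 ↔ FeasibleParity #(blade 0 S) #(blade 1 S) #S.toRight := by
  rw [det_psub_ne_zero_iff]
  refine ⟨fun h => ?_, fun hF w hS hker => eq_zero_of_mulVec_eq_zero hF hS hker⟩
  by_contra hF
  rw [FeasibleParity, card_toRight_eq_ite] at hF
  by_cases hhub : .inr () ∈ S
  · rw [if_pos hhub] at hF
    obtain ⟨w, hS, hker, hw⟩ := exists_mulVec_eq_zero_of_hub_mem hhub (by omega)
    exact hw (h w hS hker)
  · rw [if_neg hhub] at hF
    obtain ⟨c, hc⟩ : ∃ c, #(blade c S) % 2 = 1 :=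
      (show #(blade 0 S) % 2 = 1 ∨ #(blade 1 S) % 2 = 1 by omega).elim (⟨0, ·⟩) (⟨1, ·⟩)
    obtain ⟨w, hS, hker, hw⟩ := exists_mulVec_eq_zero_of_odd_blade hhub hc
    exact hw (h w hS hker)

lemma feasibleParity_symmDiff (S A : Finset (Vertex n)) :
    FeasibleParity #(blade 0 (symmDiff S A)) #(blade 1 (symmDiff S A)) #(symmDiff S A).toRight ↔
      FeasibleParity (#(blade 0 S) + #(blade 0 A)) (#(blade 1 S) + #(blade 1 A))
        (#S.toRight + #A.toRight) := by
  rw [blade_symmDiff, blade_symmDiff, toRight_symmDiff]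
  have h0 := card_symmDiff_add_two_mul_card_inter (blade 0 S) (blade 0 A)
  have h1 := card_symmDiff_add_two_mul_card_inter (blade 1 S) (blade 1 A)
  have hhub := card_symmDiff_add_two_mul_card_inter S.toRight A.toRight
  unfold FeasibleParity
  omega

/-- The sizes `x + y + g` of the sets `S` whose blades and hub part have sizes `x, y ≤ k` and
`g ≤ 1`, and for which `S ∆ A` is feasible, where the parts of `A` have sizes `a`, `b`, `h`. -/
def feasibleSizes (k a b h : ℕ) : Set ℕ :=
  {m | ∃ x ≤ k, ∃ y ≤ k, ∃ g ≤ 1, FeasibleParity (x + a) (y + b) (g + h) ∧ x + y + g = m}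

lemma sSup_sub_sInf_feasibleSizes {k a b h : ℕ} (hk : 1 ≤ k) (hh : h ≤ 1) :
    sSup (feasibleSizes k a b h) - sInf (feasibleSizes k a b h) =
      if (a + h * k) % 2 = 1 ∧ (b + h * k) % 2 = 1 then 2 * k - 2 else 2 * k := by
  have hmax : IsGreatest (feasibleSizes k a b h)
      (max (k - (k + a) % 2 + (k - (k + b) % 2) + h) (2 * k - (a + b + 1) % 2 + (1 - h))) := by
    refine ⟨max_rec' (· ∈ feasibleSizes k a b h) ?_ ?_, ?_⟩
    · exact ⟨k - (k + a) % 2, by omega, k - (k + b) % 2, by omega, h, hh,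
        by unfold FeasibleParity; omega, rfl⟩
    · exact ⟨k, le_rfl, k - (a + b + 1) % 2, by omega, 1 - h, by omega,
        by unfold FeasibleParity; omega, by omega⟩
    · rintro m ⟨x, hx, y, hy, g, hg, hF, rfl⟩
      unfold FeasibleParity at hF
      omega
  have hmin : IsLeast (feasibleSizes k a b h)
      (min (a % 2 + b % 2 + h) ((a + b + 1) % 2 + (1 - h))) := by
    refine ⟨min_rec' (· ∈ feasibleSizes k a b h) ?_ ?_, ?_⟩
    · exact ⟨a % 2, by omega, b % 2, by omega, h, hh, by unfold FeasibleParity; omega, rfl⟩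
    · exact ⟨(a + b + 1) % 2, by omega, 0, by omega, 1 - h, by omega,
        by unfold FeasibleParity; omega, by omega⟩
    · rintro m ⟨x, hx, y, hy, g, hg, hF, rfl⟩
      unfold FeasibleParity at hF
      omega
  rw [hmax.csSup_eq, hmin.csInf_eq]
  obtain rfl | rfl : h = 0 ∨ h = 1 := by omega
  all_goals split_ifs <;> omega

lemma setOf_card_twist_windmill (A : Finset (Vertex n)) :
    {m | ∃ S, (psub (windmill n 2) (symmDiff S A)).det ≠ 0 ∧ #S = m} =
      feasibleSizes (n - 1) #(blade 0 A) #(blade 1 A) #A.toRight := by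
  ext m
  constructor
  · rintro ⟨S, hS, rfl⟩
    rw [det_psub_windmill_ne_zero_iff, feasibleParity_symmDiff] at hS
    exact ⟨_, card_blade_le 0 S, _, card_blade_le 1 S, _, card_toRight_le_one S, hS,
      (card_eq_card_blade_add S).symm⟩
  · rintro ⟨x, hx, y, hy, g, hg, hF, rfl⟩
    obtain ⟨B₀, -, rfl⟩ := exists_subset_card_eq (s := (univ : Finset (Fin (n - 1))))
      (by simpa using hx)
    obtain ⟨B₁, -, rfl⟩ := exists_subset_card_eq (s := (univ : Finset (Fin (n - 1))))
      (by simpa using hy)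
    obtain ⟨U, -, rfl⟩ := exists_subset_card_eq (s := (univ : Finset Unit)) (by simpa using hg)
    obtain ⟨S, hS⟩ := splitEquiv.surjective ((B₀, B₁), U)
    obtain ⟨⟨rfl, rfl⟩, rfl⟩ := Prod.ext_iff.1 hS |>.imp_left Prod.ext_iff.1
    refine ⟨S, ?_, card_eq_card_blade_add S⟩
    rwa [det_psub_windmill_ne_zero_iff, feasibleParity_symmDiff]

def IsNarrow (k : ℕ) (p : (Finset (Fin k) × Finset (Fin k)) × Finset Unit) : Prop :=
  (#p.1.1 + #p.2 * k) % 2 = 1 ∧ (#p.1.2 + #p.2 * k) % 2 = 1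

instance (k : ℕ) : DecidablePred (IsNarrow k) := fun _ => inferInstanceAs (Decidable (_ ∧ _))

lemma twistWidth_windmill (hn : 2 ≤ n) (A : Finset (Vertex n)) :
    twistWidth (windmill n 2) A =
      if IsNarrow (n - 1) (splitEquiv A) then 2 * (n - 1) - 2 else 2 * (n - 1) := by
  rw [twistWidth, sysWidth, setOf_card_twist_windmill,
    sSup_sub_sInf_feasibleSizes (by omega) (card_toRight_le_one A)]
  rfl

lemma card_filter_isNarrow {k : ℕ} (hk : 1 ≤ k) : #{p | IsNarrow k p} = 2 ^ (2 * k - 1) := by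
  have : Nonempty (Fin k) := ⟨⟨0, hk⟩⟩
  have hblades : ∀ u : Finset Unit,
      ∑ q : Finset (Fin k) × Finset (Fin k), (if IsNarrow k (q, u) then 1 else 0) =
        2 ^ (k - 1) * 2 ^ (k - 1) := fun u => by
    rw [← card_filter, ← univ_product_univ]
    change #{q ∈ univ ×ˢ univ | (#q.1 + #u * k) % 2 = 1 ∧ (#q.2 + #u * k) % 2 = 1} = _
    rw [filter_product (fun s : Finset (Fin k) => (#s + #u * k) % 2 = 1)
      (fun s => (#s + #u * k) % 2 = 1), card_product, card_filter_card_add_mod_two_eq_one,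
      Fintype.card_fin]
  rw [card_filter, Fintype.sum_prod_type_right, sum_congr rfl fun u _ => hblades u, sum_const,
    card_univ, Fintype.card_finset, Fintype.card_unit, pow_one, smul_eq_mul, ← pow_add,
    ← pow_succ']
  congr 1
  omega

lemma card_filter_not_isNarrow {k : ℕ} (hk : 1 ≤ k) :
    #{p | ¬ IsNarrow k p} = 3 * 2 ^ (2 * k - 1) := by
  have htotal := card_filter_add_card_filter_not (s := univ) (IsNarrow k)
  rw [card_filter_isNarrow hk, card_univ, Fintype.card_prod, Fintype.card_prod,
    Fintype.card_finset, Fintype.card_finset, Fintype.card_fin, Fintype.card_unit, pow_one,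
    ← pow_add, ← pow_succ, show k + k + 1 = 2 * k - 1 + 2 by omega, pow_add] at htotal
  omega

end Windmill

open Windmill in
/-- Corollary 4.9: for every `n ≥ 2`, the one-point join of two copies of the unlooped
complete graph `K_n` (i.e. the windmill graph `K_n^{(2)}`) satisfies
`T_{K_n ∨ K_n}(z) = 2^{2n−3} · z^{2n−4} · (3z² + 1)`. -/
theorem twistPoly_join_complete (n : ℕ) (hn : 2 ≤ n) :
    twistPoly (windmill n 2)
      = 2 ^ (2 * n - 3) * X ^ (2 * n - 4) * (3 * X ^ 2 + 1) := by
  have hsum : twistPoly (windmill n 2) =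
      ∑ p, if IsNarrow (n - 1) p then X ^ (2 * n - 4) else X ^ (2 * n - 4 + 2) :=
    Fintype.sum_equiv splitEquiv _ _ fun A => by
      rw [twistWidth_windmill hn, show 2 * (n - 1) - 2 = 2 * n - 4 by omega,
        show 2 * (n - 1) = 2 * n - 4 + 2 by omega]
      exact apply_ite _ _ _ _
  have hk : 1 ≤ n - 1 := by omega
  have hexp : 2 * (n - 1) - 1 = 2 * n - 3 := by omega
  rw [hsum, sum_ite, sum_const, sum_const, card_filter_isNarrow hk, card_filter_not_isNarrow hk,
    hexp, nsmul_eq_mul, nsmul_eq_mul]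
  push_cast
  ring
end

section
/- Let 𝔽 be a field and n, m ∈ ℕ. Suppose M is the (n+1+m)×(n+1+m) matrix over 𝔽 given in block form by M = [[A', u, 0], [vᵀ, c, xᵀ], [0, y, B']], where A' is n×n, B' is m×m, u and v are n-dimensional column vectors, x and y are m-dimensional column vectors, c ∈ 𝔽, and the off-diagonal corner blocks are zero. Let A = [[A', u], [vᵀ, c]] (an (n+1)×(n+1) matrix) and B = [[c, xᵀ], [y, B']] (an (m+1)×(m+1) matrix). Then det M = det A · det B' + det A' · det B − c · det A' · det B'. -/
open Matrix

/-- The matrix `A = [[A', u], [vᵀ, c]]`. -/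
def cornerA {𝔽 : Type*} [Field 𝔽] {n : ℕ} (A' : Matrix (Fin n) (Fin n) 𝔽)
    (u v : Fin n → 𝔽) (c : 𝔽) : Matrix (Fin n ⊕ Unit) (Fin n ⊕ Unit) 𝔽 :=
  Matrix.fromBlocks A' (Matrix.of fun a (_ : Unit) => u a)
    (Matrix.of fun (_ : Unit) b => v b) (Matrix.of fun _ _ => c)

/-- The matrix `B = [[c, xᵀ], [y, B']]`. -/
def cornerB {𝔽 : Type*} [Field 𝔽] {m : ℕ} (B' : Matrix (Fin m) (Fin m) 𝔽)
    (x y : Fin m → 𝔽) (c : 𝔽) : Matrix (Unit ⊕ Fin m) (Unit ⊕ Fin m) 𝔽 :=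
  Matrix.fromBlocks (Matrix.of fun (_ : Unit) (_ : Unit) => c)
    (Matrix.of fun (_ : Unit) b => x b) (Matrix.of fun a (_ : Unit) => y a) B'

/-- The almost block-diagonal matrix `M = [[A', u, 0], [vᵀ, c, xᵀ], [0, y, B']]`,
whose two diagonal blocks `A` and `B` overlap in the single entry `c`. -/
def overlapM {𝔽 : Type*} [Field 𝔽] {n m : ℕ} (A' : Matrix (Fin n) (Fin n) 𝔽)
    (B' : Matrix (Fin m) (Fin m) 𝔽) (u v : Fin n → 𝔽) (x y : Fin m → 𝔽) (c : 𝔽) :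
    Matrix (Fin n ⊕ (Unit ⊕ Fin m)) (Fin n ⊕ (Unit ⊕ Fin m)) 𝔽 :=
  Matrix.fromBlocks A'
    (Matrix.of fun a j => Sum.elim (fun _ : Unit => u a) (fun _ : Fin m => (0 : 𝔽)) j)
    (Matrix.of fun i b => Sum.elim (fun _ : Unit => v b) (fun _ : Fin m => (0 : 𝔽)) i)
    (cornerB B' x y c)

/-- det of `B = [[c,xᵀ],[y,B']]` is affine in `c`. -/
lemma cornerB_det {𝔽 : Type*} [Field 𝔽] {m : ℕ} (B' : Matrix (Fin m) (Fin m) 𝔽)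
    (x y : Fin m → 𝔽) (c : 𝔽) :
    (cornerB B' x y c).det = c * B'.det + (cornerB B' x y 0).det := by
  classical
  have hrow : (cornerB B' x y c) (Sum.inl ()) =
      (Sum.elim (fun _ : Unit => c) (fun _ : Fin m => (0:𝔽))) +
      (Sum.elim (fun _ : Unit => (0:𝔽)) x) := by
    funext j; rcases j with _ | d <;> simp [cornerB]
  have h1 : (cornerB B' x y c).updateRow (Sum.inl ())
      (Sum.elim (fun _ : Unit => c) (fun _ : Fin m => (0:𝔽))) =
      Matrix.fromBlocks (Matrix.of fun (_ : Unit) (_ : Unit) => c) 0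
        (Matrix.of fun a (_ : Unit) => y a) B' := by
    ext i j
    rcases i with _ | a <;> rcases j with _ | d <;>
      simp [cornerB, Matrix.updateRow_apply]
  have h2 : (cornerB B' x y c).updateRow (Sum.inl ())
      (Sum.elim (fun _ : Unit => (0:𝔽)) x) = cornerB B' x y 0 := by
    ext i j
    rcases i with _ | a <;> rcases j with _ | d <;>
      simp [cornerB, Matrix.updateRow_apply]
  calc (cornerB B' x y c).det
      = ((cornerB B' x y c).updateRow (Sum.inl ())
          ((Sum.elim (fun _ : Unit => c) (fun _ : Fin m => (0:𝔽))) +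
           (Sum.elim (fun _ : Unit => (0:𝔽)) x))).det := by
        rw [← hrow, Matrix.updateRow_eq_self]
    _ = c * B'.det + (cornerB B' x y 0).det := by
        rw [Matrix.det_updateRow_add, h1, h2, Matrix.det_fromBlocks_zero₁₂]
        simp [Matrix.det_unique]

/-- Lemma 5.1: for a field `𝔽` and a matrix `M = [[A', u, 0], [vᵀ, c, xᵀ], [0, y, B']]`
over `𝔽`, with `A = [[A', u], [vᵀ, c]]` and `B = [[c, xᵀ], [y, B']]`,
`det M = det A · det B' + det A' · det B − c · det A' · det B'`. -/
theorem det_overlap_block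
    {𝔽 : Type*} [Field 𝔽] (n m : ℕ) (A' : Matrix (Fin n) (Fin n) 𝔽)
    (B' : Matrix (Fin m) (Fin m) 𝔽) (u v : Fin n → 𝔽) (x y : Fin m → 𝔽) (c : 𝔽) :
    (overlapM A' B' u v x y c).det
      = (cornerA A' u v c).det * B'.det + A'.det * (cornerB B' x y c).det
        - c * A'.det * B'.det := by
  classical
  set M := overlapM A' B' u v x y c with hM
  set r : Fin n ⊕ (Unit ⊕ Fin m) := Sum.inr (Sum.inl ()) with hr
  set f : Fin n ⊕ (Unit ⊕ Fin m) → 𝔽 :=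
    Sum.elim v (Sum.elim (fun _ => c) (fun _ => (0:𝔽))) with hf
  set g : Fin n ⊕ (Unit ⊕ Fin m) → 𝔽 :=
    Sum.elim (fun _ => (0:𝔽)) (Sum.elim (fun _ => (0:𝔽)) x) with hg
  have hrow : M r = f + g := by
    funext j
    rcases j with a | (b | d) <;> simp [hM, hr, hf, hg, overlapM, cornerB]
  have e := Equiv.sumAssoc (Fin n) Unit (Fin m)
  -- first piece
  have h1 : (M.updateRow r f).det = (cornerA A' u v c).det * B'.det := by
    have heq : (M.updateRow r f).submatrix (Equiv.sumAssoc (Fin n) Unit (Fin m))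
        (Equiv.sumAssoc (Fin n) Unit (Fin m)) =
        Matrix.fromBlocks (cornerA A' u v c) 0
          (Matrix.of fun (i : Fin m) p =>
            Sum.elim (fun _ : Fin n => (0:𝔽)) (fun _ : Unit => y i) p) B' := by
      ext i j
      rcases i with (a | _) | i <;> rcases j with (b | _) | j <;>
        simp [hM, hr, hf, overlapM, cornerA, cornerB, Matrix.updateRow_apply]
    calc (M.updateRow r f).det
        = ((M.updateRow r f).submatrix (Equiv.sumAssoc (Fin n) Unit (Fin m))
            (Equiv.sumAssoc (Fin n) Unit (Fin m))).det :=
          (Matrix.det_submatrix_equiv_self _ _).symm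
      _ = (cornerA A' u v c).det * B'.det := by
          rw [heq, Matrix.det_fromBlocks_zero₁₂]
  -- second piece
  have h2 : (M.updateRow r g).det = A'.det * (cornerB B' x y 0).det := by
    have heq : M.updateRow r g =
        Matrix.fromBlocks A'
          (Matrix.of fun a j => Sum.elim (fun _ : Unit => u a) (fun _ : Fin m => (0:𝔽)) j)
          0 (cornerB B' x y 0) := by
      ext i j
      rcases i with a | (_ | i) <;> rcases j with b | (_ | j) <;>
        simp [hM, hr, hg, overlapM, cornerB, Matrix.updateRow_apply]
    rw [heq, Matrix.det_fromBlocks_zero₂₁]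
  have : M.det = (M.updateRow r (f + g)).det := by
    rw [← hrow, Matrix.updateRow_eq_self]
  rw [this, Matrix.det_updateRow_add, h1, h2, cornerB_det B' x y c]
  ring
end
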